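/- arXiv:2007.01827 — 9 statements merged into one kernel-verified Lean document; each statement's English description precedes it below -/
import Mathlib

section
/- Let δ ≥ 2 and let G be a graph with loops on n vertices with minimum degree at least δ. Define ε = (1 + log(δ+1))/(δ+1). Then G contains a dominated set of size at least (1−ε)·n. -/
open Finset

/-- `D` is a dominated set in the graph-with-loops `adj`: every vertex of `D`
has a loop or a neighbor outside `D`. -/
def DominatedSet {V : Type*} (adj : V → V → Prop) (D : Finset V) : Prop :=
  ∀ v ∈ D, adj v v ∨ ∃ u, u ∉ D ∧ adj v u

/-- A graph with loops on `n` vertices with minimum degree at least `δ ≥ 2`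
(degree counts loops) has a dominated set of size at least `(1 - ε) n`,
where `ε = (1 + log(δ+1))/(δ+1)`. -/
theorem stmt1 {V : Type*} [Fintype V] [DecidableEq V]
    (adj : V → V → Prop) [DecidableRel adj]
    (hsymm : ∀ u v, adj u v → adj v u)
    (δ : ℕ) (hδ : 2 ≤ δ)
    (hmin : ∀ v : V, δ ≤ (univ.filter (fun u => adj v u)).card) :
    ∃ D : Finset V, DominatedSet adj D ∧
      (1 - (1 + Real.log (δ + 1)) / (δ + 1)) * (Fintype.card V : ℝ) ≤ (D.card : ℝ) := by
  classical
  set n := Fintype.card V with hn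
  set x : ℝ := (δ : ℝ) + 1 with hxdef
  have hδ3 : (2:ℝ) ≤ (δ:ℝ) := by exact_mod_cast hδ
  have hx3 : (3:ℝ) ≤ x := by rw [hxdef]; linarith
  have hx0 : (0:ℝ) < x := by linarith
  have hx1 : (1:ℝ) < x := by linarith
  set p : ℝ := Real.log x / x with hpdef
  have hp0 : 0 < p := div_pos (Real.log_pos hx1) hx0
  have hp1 : p < 1 := by
    rw [hpdef, div_lt_one hx0]
    have := Real.log_le_sub_one_of_pos hx0; linarith
  have h1p0 : (0:ℝ) < 1 - p := by linarith
  set w : Finset V → ℝ := fun S => p ^ S.card * (1 - p) ^ (n - S.card) with hwdef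
  have hwpos : ∀ S : Finset V, 0 < w S := fun S =>
    mul_pos (pow_pos hp0 _) (pow_pos h1p0 _)
  -- the closed neighborhood of v
  set Nc : V → Finset V := fun v => insert v (univ.filter (fun u => adj v u)) with hNc
  -- the "undominated" vertices for a set S
  set U : Finset V → Finset V :=
    fun S => univ.filter (fun v => ¬ adj v v ∧ S ⊆ univ \ Nc v) with hU
  -- weighted sum over all subsets of t
  have hpow : ∀ t : Finset V, ∑ S ∈ t.powerset, w S = (1 - p) ^ (n - t.card) := by
    intro t
    have htn : t.card ≤ n := Finset.card_le_univ t
    have hbin : ∑ S ∈ t.powerset, p ^ S.card * (1 - p) ^ (t.card - S.card) = 1 := by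
      have h := Finset.prod_add (fun _ : V => p) (fun _ : V => 1 - p) t
      have h2 : ∏ _i ∈ t, (p + (1 - p)) = 1 := by
        simp
      rw [h2] at h
      have h3 : ∑ S ∈ t.powerset, p ^ S.card * (1 - p) ^ (t.card - S.card)
          = ∑ S ∈ t.powerset, (∏ _i ∈ S, p) * ∏ _i ∈ t \ S, (1 - p) := by
        apply Finset.sum_congr rfl
        intro S hS
        rw [Finset.prod_const, Finset.prod_const,
          Finset.card_sdiff_of_subset (Finset.mem_powerset.1 hS)]
      rw [h3, ← h]
    calc ∑ S ∈ t.powerset, w S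
        = ∑ S ∈ t.powerset,
            (p ^ S.card * (1 - p) ^ (t.card - S.card)) * (1 - p) ^ (n - t.card) := by
          apply Finset.sum_congr rfl
          intro S hS
          have hSt : S.card ≤ t.card := Finset.card_le_card (Finset.mem_powerset.1 hS)
          have : n - S.card = (t.card - S.card) + (n - t.card) := by omega
          rw [hwdef]
          simp only []
          rw [this, pow_add]
          ring
      _ = (1 - p) ^ (n - t.card) := by rw [← Finset.sum_mul, hbin, one_mul]
  have htot : ∑ S ∈ univ.powerset, w S = 1 := by
    rw [hpow univ, Finset.card_univ, ← hn, Nat.sub_self, pow_zero]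
  -- sum over sets avoiding A
  have hA : ∀ A : Finset V,
      ∑ S ∈ univ.powerset, (if S ⊆ univ \ A then w S else 0) = (1 - p) ^ A.card := by
    intro A
    rw [← Finset.sum_filter]
    have hfil : univ.powerset.filter (fun S => S ⊆ univ \ A) = (univ \ A).powerset := by
      ext S; simp [Finset.mem_powerset]
    rw [hfil, hpow]
    congr 1
    have hAle : A.card ≤ n := Finset.card_le_univ A
    rw [Finset.card_sdiff_of_subset (Finset.subset_univ A), Finset.card_univ, ← hn]
    omega
  -- probability a fixed v lies in S
  have hv : ∀ v : V, ∑ S ∈ univ.powerset, w S * (if v ∈ S then (1:ℝ) else 0) = p := by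
    intro v
    have hstep : ∀ S : Finset V,
        w S * (if v ∈ S then (1:ℝ) else 0) = w S - (if S ⊆ univ \ {v} then w S else 0) := by
      intro S
      by_cases h : v ∈ S
      · have hns : ¬ (S ⊆ univ \ {v}) := by
          intro hc
          have := hc h
          simp at this
        simp [h, hns]
      · have hs : S ⊆ univ \ {v} := by
          intro u hu
          simp only [Finset.mem_sdiff, Finset.mem_univ, Finset.mem_singleton, true_and]
          rintro rfl; exact h hu
        simp [h, hs]
    rw [Finset.sum_congr rfl (fun S _ => hstep S), Finset.sum_sub_distrib, htot, hA {v}]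
    simp
  -- probability v is "undominated"
  have hUv : ∀ v : V,
      ∑ S ∈ univ.powerset, w S * (if v ∈ U S then (1:ℝ) else 0) ≤ (1 - p) ^ (δ + 1) := by
    intro v
    by_cases hloop : adj v v
    · have : ∀ S : Finset V, v ∉ U S := by
        intro S
        simp [hU, hloop]
      rw [Finset.sum_congr rfl (fun S _ => by rw [if_neg (this S), mul_zero])]
      rw [Finset.sum_const, smul_zero]
      positivity
    · have hstep : ∀ S : Finset V,
          w S * (if v ∈ U S then (1:ℝ) else 0) = (if S ⊆ univ \ Nc v then w S else 0) := by
        intro S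
        by_cases h : S ⊆ univ \ Nc v
        · have : v ∈ U S := by simp [hU, hloop, h]
          simp [this, h]
        · have : v ∉ U S := by simp [hU, hloop, h]
          simp [this, h]
      rw [Finset.sum_congr rfl (fun S _ => hstep S), hA]
      apply pow_le_pow_of_le_one (le_of_lt h1p0) (by linarith)
      -- δ + 1 ≤ (Nc v).card
      have hvnot : v ∉ univ.filter (fun u => adj v u) := by simp [hloop]
      rw [hNc]
      simp only []
      rw [Finset.card_insert_of_notMem hvnot]
      have := hmin v
      omega
  -- expectation of |S|
  have hEcard : ∑ S ∈ univ.powerset, w S * (S.card : ℝ) = (n : ℝ) * p := by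
    have hc : ∀ S : Finset V, (S.card : ℝ) = ∑ u ∈ univ, (if u ∈ S then (1:ℝ) else 0) := by
      intro S
      rw [Finset.sum_ite_mem, Finset.univ_inter, Finset.sum_const, nsmul_eq_mul, mul_one]
    calc ∑ S ∈ univ.powerset, w S * (S.card : ℝ)
        = ∑ S ∈ univ.powerset, ∑ u ∈ univ, w S * (if u ∈ S then (1:ℝ) else 0) := by
          apply Finset.sum_congr rfl
          intro S _
          rw [hc S, Finset.mul_sum]
      _ = ∑ u ∈ univ, ∑ S ∈ univ.powerset, w S * (if u ∈ S then (1:ℝ) else 0) :=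
          Finset.sum_comm
      _ = ∑ _u ∈ univ, p := Finset.sum_congr rfl (fun u _ => hv u)
      _ = (n : ℝ) * p := by rw [Finset.sum_const, Finset.card_univ, ← hn, nsmul_eq_mul]
  -- expectation of |U S|
  have hEU : ∑ S ∈ univ.powerset, w S * ((U S).card : ℝ) ≤ (n : ℝ) * (1 - p) ^ (δ + 1) := by
    have hc : ∀ S : Finset V, ((U S).card : ℝ) = ∑ u ∈ univ, (if u ∈ U S then (1:ℝ) else 0) := by
      intro S
      rw [Finset.sum_ite_mem, Finset.univ_inter, Finset.sum_const, nsmul_eq_mul, mul_one]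
    calc ∑ S ∈ univ.powerset, w S * ((U S).card : ℝ)
        = ∑ S ∈ univ.powerset, ∑ u ∈ univ, w S * (if u ∈ U S then (1:ℝ) else 0) := by
          apply Finset.sum_congr rfl
          intro S _
          rw [hc S, Finset.mul_sum]
      _ = ∑ u ∈ univ, ∑ S ∈ univ.powerset, w S * (if u ∈ U S then (1:ℝ) else 0) :=
          Finset.sum_comm
      _ ≤ ∑ _u ∈ univ, (1 - p) ^ (δ + 1) := Finset.sum_le_sum (fun u _ => hUv u)
      _ = (n : ℝ) * (1 - p) ^ (δ + 1) := by
          rw [Finset.sum_const, Finset.card_univ, ← hn, nsmul_eq_mul]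
  -- (1-p)^(δ+1) ≤ 1/x
  have hexp : (1 - p) ^ (δ + 1) ≤ 1 / x := by
    have h1 : (1 - p) ^ (δ + 1) ≤ Real.exp (-p) ^ (δ + 1) := by
      apply pow_le_pow_left₀ (le_of_lt h1p0)
      have := Real.add_one_le_exp (-p); linarith
    have h2 : Real.exp (-p) ^ (δ + 1) = Real.exp (((δ:ℝ) + 1) * (-p)) := by
      rw [← Real.exp_nat_mul]
      congr 1
      push_cast
      ring
    have h3 : ((δ:ℝ) + 1) * (-p) = - Real.log x := by
      rw [hpdef, ← hxdef]
      field_simp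
    rw [h2, h3, Real.exp_neg, Real.exp_log hx0] at h1
    rw [one_div]
    exact h1
  -- bound on expectation
  set ε : ℝ := (1 + Real.log x) / x with hε
  have hεsplit : ε = p + 1 / x := by
    rw [hε, hpdef]
    field_simp
    ring
  have hEtot : ∑ S ∈ univ.powerset, w S * ((S.card : ℝ) + ((U S).card : ℝ)) ≤ ε * n := by
    have : ∑ S ∈ univ.powerset, w S * ((S.card : ℝ) + ((U S).card : ℝ))
        = (∑ S ∈ univ.powerset, w S * (S.card : ℝ))
          + ∑ S ∈ univ.powerset, w S * ((U S).card : ℝ) := by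
      rw [← Finset.sum_add_distrib]
      apply Finset.sum_congr rfl
      intro S _; ring
    rw [this, hEcard]
    have hn0 : (0:ℝ) ≤ (n:ℝ) := Nat.cast_nonneg n
    have h2 : (n:ℝ) * (1 - p) ^ (δ + 1) ≤ (n:ℝ) * (1/x) :=
      mul_le_mul_of_nonneg_left hexp hn0
    calc (n : ℝ) * p + ∑ S ∈ univ.powerset, w S * ((U S).card : ℝ)
        ≤ (n : ℝ) * p + (n:ℝ) * (1/x) := by linarith [hEU]
      _ = ε * n := by rw [hεsplit]; ring
  -- extract a good S
  have hex : ∃ S ∈ univ.powerset, ((S.card : ℝ) + ((U S).card : ℝ)) ≤ ε * n := by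
    by_contra hcon
    push_neg at hcon
    have hlt : ∑ S ∈ univ.powerset, w S * (ε * n)
        < ∑ S ∈ univ.powerset, w S * ((S.card : ℝ) + ((U S).card : ℝ)) := by
      apply Finset.sum_lt_sum_of_nonempty
      · exact ⟨∅, Finset.mem_powerset.2 (Finset.empty_subset _)⟩
      · intro S hS
        exact mul_lt_mul_of_pos_left (hcon S hS) (hwpos S)
    rw [← Finset.sum_mul, htot, one_mul] at hlt
    linarith
  obtain ⟨S, -, hSbound⟩ := hex
  refine ⟨univ \ (S ∪ U S), ?_, ?_⟩
  · -- dominated set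
    intro v hvD
    rw [Finset.mem_sdiff, Finset.mem_union] at hvD
    obtain ⟨-, hvnot⟩ := hvD
    push_neg at hvnot
    obtain ⟨hvS, hvU⟩ := hvnot
    by_cases hloop : adj v v
    · exact Or.inl hloop
    · right
      have hsub : ¬ (S ⊆ univ \ Nc v) := by
        intro hc
        exact hvU (by simp [hU, hloop, hc])
      obtain ⟨u, huS, huNc⟩ := Finset.not_subset.1 hsub
      have : u ∈ Nc v := by
        by_contra hne
        exact huNc (Finset.mem_sdiff.2 ⟨Finset.mem_univ u, hne⟩)
      rw [hNc] at this
      simp only [Finset.mem_insert, Finset.mem_filter, Finset.mem_univ, true_and] at this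
      rcases this with rfl | hadj
      · exact absurd huS hvS
      · refine ⟨u, ?_, hadj⟩
        rw [Finset.mem_sdiff]
        push_neg
        intro _
        exact Finset.mem_union_left _ huS
  · -- cardinality bound
    have hsub : S ∪ U S ⊆ univ := Finset.subset_univ _
    have hcard : (univ \ (S ∪ U S)).card = n - (S ∪ U S).card := by
      rw [Finset.card_sdiff_of_subset hsub, Finset.card_univ]
    have hle : (S ∪ U S).card ≤ n := Finset.card_le_univ _
    have hcast : ((univ \ (S ∪ U S)).card : ℝ) = (n : ℝ) - ((S ∪ U S).card : ℝ) := by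
      rw [hcard, Nat.cast_sub hle]
    have hunion : ((S ∪ U S).card : ℝ) ≤ (S.card : ℝ) + ((U S).card : ℝ) := by
      exact_mod_cast Finset.card_union_le S (U S)
    rw [hcast]
    have hgoal : (1 - ε) * (n : ℝ) = (n : ℝ) - ε * (n : ℝ) := by ring
    rw [show (1 - (1 + Real.log (↑δ + 1)) / (↑δ + 1)) = 1 - ε by rw [hε, hxdef], hgoal]
    linarith
end

section
/- Let G_x and G_y be two graphs with loops on a common finite vertex set S, each with minimum degree at least 1. Then there exists a set D ⊆ S that is a dominated set in both G_x and G_y with |D| ≥ |S|/3. -/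
/-!
Every graph of minimum degree at least 1 has a spanning star forest covering all vertices
without a loop. The union of two star forests is 3-colourable: on any vertex set, either some
vertex is the centre of no star edge inside the set in either forest, so it has at most two
neighbours there and can be coloured last, or every vertex is a centre in one of the forests,
and the three classes "centre in both", "centre only for `x`", "centre only for `y`" are
independent. A largest colour class has at least `|S|/3` vertices, and every loopless vertex in
it has a star neighbour of another colour in each forest.
-/

open Finset

section

variable {V : Type*}

/-- The fixed points of `f` are the centres of the stars, and every other vertex `v` is a leaf
attached to the centre `f v`. -/
structure IsStarForest (adj : V → V → Prop) (f : V → V) : Prop where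
  idem : ∀ v, f (f v) = f v
  adj_apply_of_ne : ∀ v, f v ≠ v → adj v (f v)

/-- The vertices lying in a star with at least two vertices. -/
def starCovered (f : V → V) : Set V := {v | f v ≠ v ∨ ∃ u ≠ v, f u = v}

@[simp]
lemma mem_starCovered {f : V → V} {v : V} :
    v ∈ starCovered f ↔ f v ≠ v ∨ ∃ u ≠ v, f u = v := Iff.rfl

section StarForest

variable {adj : V → V → Prop} {f : V → V}

lemma IsStarForest.exists_insert_subset [DecidableEq V] (hsymm : ∀ u v, adj u v → adj v u)
    (hf : IsStarForest adj f) {t u : V} (ht : t ∉ starCovered f) (htu : adj t u) (hut : u ≠ t) :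
    ∃ f', IsStarForest adj f' ∧ insert t (starCovered f) ⊆ starCovered f' := by
  have hidem := hf.idem
  have hadj := hf.adj_apply_of_ne
  simp only [mem_starCovered, not_or, not_exists, not_and, not_not] at ht
  by_cases hleaf : ∃ u', u' ≠ u ∧ u' ≠ f u ∧ f u' = f u
  · -- `u` becomes a centre with the leaf `t`; the old centre `f u` keeps its leaf `u'`
    refine ⟨fun v => if v = t ∨ v = u then u else f v,
      ⟨fun v => by grind, fun v hv => by grind⟩, fun v hv => ?_⟩
    simp only [Set.mem_insert_iff, mem_starCovered] at hv ⊢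
    grind
  · -- the star of `u` is `{u, f u}`: re-centre it at `u` and attach `t`
    push Not at hleaf
    refine ⟨fun v => if v = t ∨ v = u ∨ v = f u then u else f v,
      ⟨fun v => by grind, fun v hv => by grind⟩, fun v hv => ?_⟩
    simp only [Set.mem_insert_iff, mem_starCovered] at hv ⊢
    grind

lemma exists_isStarForest_forall_mem_starCovered [Finite V] (hsymm : ∀ u v, adj u v → adj v u)
    (hmin : ∀ v, ∃ u, adj v u) :
    ∃ f, IsStarForest adj f ∧ ∀ v, ¬ adj v v → v ∈ starCovered f := by
  classical
  obtain ⟨f, hf, hmax⟩ := Set.Finite.exists_maximalFor starCovered {f | IsStarForest adj f}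
    (Set.toFinite _) ⟨id, fun _ => rfl, fun _ h => (h rfl).elim⟩
  refine ⟨f, hf, fun t ht => by_contra fun htf => ?_⟩
  obtain ⟨u, hu⟩ := hmin t
  obtain ⟨f', hf', hsub⟩ := hf.exists_insert_subset hsymm htf hu (by rintro rfl; exact ht hu)
  exact htf (hmax hf' ((Set.subset_insert _ _).trans hsub) (hsub (Set.mem_insert _ _)))

end StarForest

def SeparatesArcsOn {α : Type*} (c : V → α) (f : V → V) (A : Finset V) : Prop :=
  ∀ v ∈ A, f v ∈ A → f v ≠ v → c (f v) ≠ c v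

section Colouring

variable {α : Type*} {f fx fy : V → V}

lemma SeparatesArcsOn.update [DecidableEq V] {c : V → α} {A : Finset V} {v : V} {k : α}
    (hc : SeparatesArcsOn c f (A.erase v)) (hv : ∀ u ∈ A, u ≠ v → f u ≠ v) (hk : k ≠ c (f v)) :
    SeparatesArcsOn (Function.update c v k) f A := by
  intro u hu hfu hne
  by_cases huv : u = v
  · subst huv
    simpa [Function.update_of_ne hne] using hk.symm
  · have hfuv := hv u hu huv
    simpa [Function.update_of_ne huv, Function.update_of_ne hfuv] using
      hc u (mem_erase.2 ⟨huv, hu⟩) (mem_erase.2 ⟨hfuv, hfu⟩) hne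

lemma exists_separatesArcsOn_of_forall_centre (hx : ∀ v, fx (fx v) = fx v)
    (hy : ∀ v, fy (fy v) = fy v) (A : Finset V)
    (hA : ∀ v ∈ A, (∃ u ∈ A, u ≠ v ∧ fx u = v) ∨ (∃ u ∈ A, u ≠ v ∧ fy u = v)) :
    ∃ c : V → Fin 3, SeparatesArcsOn c fx A ∧ SeparatesArcsOn c fy A := by
  classical
  have hleaf {f : V → V} (hf : ∀ v, f (f v) = f v) {u v : V} (hv : f v ≠ v) : f u ≠ v := by
    rintro rfl; exact hv (hf u)
  refine ⟨fun v => if ∃ u ∈ A, u ≠ v ∧ fx u = v then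
    (if ∃ u ∈ A, u ≠ v ∧ fy u = v then 0 else 1) else 2, ?_, ?_⟩
  · intro v hv hfv hne
    have hv' : ¬ ∃ u ∈ A, u ≠ v ∧ fx u = v := fun ⟨u, _, _, hu⟩ => hleaf hx hne hu
    have hfv' : ∃ u ∈ A, u ≠ fx v ∧ fx u = fx v := ⟨v, hv, hne.symm, rfl⟩
    simp only [hv', hfv', if_true, if_false]
    split_ifs <;> decide
  · intro v hv hfv hne
    have hvy : ¬ ∃ u ∈ A, u ≠ v ∧ fy u = v := fun ⟨u, _, _, hu⟩ => hleaf hy hne hu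
    have hvx : ∃ u ∈ A, u ≠ v ∧ fx u = v := (hA v hv).resolve_right hvy
    have hfv' : ∃ u ∈ A, u ≠ fy v ∧ fy u = fy v := ⟨v, hv, hne.symm, rfl⟩
    simp only [hvx, hvy, hfv', if_true, if_false]
    split_ifs <;> decide

lemma exists_separatesArcsOn_fin_three (hx : ∀ v, fx (fx v) = fx v)
    (hy : ∀ v, fy (fy v) = fy v) (A : Finset V) :
    ∃ c : V → Fin 3, SeparatesArcsOn c fx A ∧ SeparatesArcsOn c fy A := by
  classical
  induction A using Finset.strongInduction with
  | H A ih =>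
  by_cases hA : ∃ v ∈ A, (∀ u ∈ A, u ≠ v → fx u ≠ v) ∧ (∀ u ∈ A, u ≠ v → fy u ≠ v)
  · obtain ⟨v, hvA, hvx, hvy⟩ := hA
    obtain ⟨c, hcx, hcy⟩ := ih (A.erase v) (erase_ssubset hvA)
    obtain ⟨k, hkx, hky⟩ : ∃ k : Fin 3, k ≠ c (fx v) ∧ k ≠ c (fy v) := by
      generalize c (fx v) = a; generalize c (fy v) = b; revert a b; decide
    exact ⟨Function.update c v k, hcx.update hvx hkx, hcy.update hvy hky⟩
  · refine exists_separatesArcsOn_of_forall_centre hx hy A fun v hv => ?_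
    by_contra! h
    exact hA ⟨v, hv, h⟩

end Colouring

lemma IsStarForest.dominatedSet_fiber [Fintype V] {adj : V → V → Prop} {f : V → V} {α : Type*}
    [DecidableEq α] (hsymm : ∀ u v, adj u v → adj v u) (hf : IsStarForest adj f)
    (hcov : ∀ v, ¬ adj v v → v ∈ starCovered f) {c : V → α} (hc : SeparatesArcsOn c f univ)
    (k : α) : DominatedSet adj {v | c v = k} := by
  intro v hv
  rw [or_iff_not_imp_left]
  intro hloop
  simp only [mem_filter, mem_univ, true_and] at hv
  rcases hcov v hloop with hne | ⟨u, hne, rfl⟩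
  · refine ⟨f v, ?_, hf.adj_apply_of_ne v hne⟩
    simpa [hv] using hc v (mem_univ _) (mem_univ _) hne
  · refine ⟨u, ?_, hsymm _ _ (hf.adj_apply_of_ne u hne.symm)⟩
    simpa [← hv] using (hc u (mem_univ _) (mem_univ _) hne.symm).symm

end

/-- Two graphs with loops on a common finite vertex set, each of minimum degree
at least 1 (i.e. every vertex has a loop or a neighbor), have a common dominated
set of size at least a third of the vertex set. -/
theorem stmt2 {V : Type*} [Fintype V]
    (adjx adjy : V → V → Prop)
    (hsymmx : ∀ u v, adjx u v → adjx v u)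
    (hsymmy : ∀ u v, adjy u v → adjy v u)
    (hminx : ∀ v, ∃ u, adjx v u)
    (hminy : ∀ v, ∃ u, adjy v u) :
    ∃ D : Finset V, DominatedSet adjx D ∧ DominatedSet adjy D ∧
      (Fintype.card V : ℝ) / 3 ≤ (D.card : ℝ) := by
  obtain ⟨fx, hfx, hcovx⟩ := exists_isStarForest_forall_mem_starCovered hsymmx hminx
  obtain ⟨fy, hfy, hcovy⟩ := exists_isStarForest_forall_mem_starCovered hsymmy hminy
  obtain ⟨c, hcx, hcy⟩ := exists_separatesArcsOn_fin_three hfx.idem hfy.idem univ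
  obtain ⟨k, -, hk⟩ := exists_le_card_fiber_of_nsmul_le_card_of_maps_to (s := univ)
    (f := c) (fun _ _ => mem_univ _) univ_nonempty (b := (Fintype.card V : ℝ) / 3)
    (by simp [mul_div_cancel₀])
  exact ⟨_, hfx.dominatedSet_fiber hsymmx hcovx hcx k,
    hfy.dominatedSet_fiber hsymmy hcovy hcy k, hk⟩
end

section
/- Let H be a 3-uniform hypergraph, let x, y be distinct vertices of H, and let S ⊆ V(H) \ {x,y}. Define the link graph L_x on S by: for u, v ∈ S distinct, uv is an edge if {u,v,x} ∈ E(H); and u has a loop for each edge of H of the form {u,w,x} with w ∉ S ∪ {y}. Define L_y analogously with the roles of x and y swapped. If there exists D ⊆ S with |D| = t such that D is a dominated set in both L_x and L_y, then H contains a trace of the complete bipartite graph K_{2,t}. -/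
open Finset

/-- A 3-uniform hypergraph `H` contains `K_{2,t}` as a trace: there are distinct
vertices `x, y` and a `t`-set `D` disjoint from them, together with hyperedges
`f u` and `g u` (for `u ∈ D`) whose intersections with `{x,y} ∪ D` are exactly
`{x,u}` and `{y,u}` respectively.  (These `2t` hyperedges are automatically
pairwise distinct since their intersections with `{x,y} ∪ D` differ.) -/
def ContainsTraceK2t {V : Type*} [DecidableEq V] (H : Finset (Finset V)) (t : ℕ) : Prop :=
  ∃ (x y : V) (D : Finset V) (f g : V → Finset V), x ≠ y ∧ x ∉ D ∧ y ∉ D ∧ D.card = t ∧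
    ∀ u ∈ D, f u ∈ H ∧ g u ∈ H ∧
      f u ∩ (insert x (insert y D)) = {x, u} ∧
      g u ∩ (insert x (insert y D)) = {y, u}

/-- The link graph with loops `L_x(H,S,y)` on `S`: `u v` is an edge when
`{u,v,x} ∈ H`, and `u` has a loop when some `{u,w,x} ∈ H` with `w ∉ S ∪ {y}`. -/
def linkAdj {V : Type*} [DecidableEq V] (H : Finset (Finset V)) (S : Finset V)
    (x y : V) : V → V → Prop :=
  fun u v => (u ≠ v ∧ ({u, v, x} : Finset V) ∈ H) ∨
    (u = v ∧ ∃ w, w ∉ S ∧ w ≠ y ∧ ({u, w, x} : Finset V) ∈ H)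

/-- `D` is a dominated set (within the vertex set `S`) of the graph-with-loops
`adj`: every vertex of `D` has a loop or a neighbor in `S` outside `D`. -/
def DominatedSetOn {V : Type*} (S : Finset V) (adj : V → V → Prop) (D : Finset V) : Prop :=
  ∀ v ∈ D, adj v v ∨ ∃ u ∈ S, u ∉ D ∧ adj v u

lemma inter_lemma {V : Type*} [DecidableEq V] (T : Finset V) (u w z : V)
    (hu : u ∈ T) (hz : z ∈ T) (hw : w ∉ T) :
    ({u, w, z} : Finset V) ∩ T = {z, u} := by
  ext a
  simp only [mem_inter, mem_insert, mem_singleton]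
  constructor
  · rintro ⟨rfl | rfl | rfl, h⟩
    · exact Or.inr rfl
    · exact absurd h hw
    · exact Or.inl rfl
  · rintro (rfl | rfl)
    · exact ⟨Or.inr (Or.inr rfl), hz⟩
    · exact ⟨Or.inl rfl, hu⟩

lemma ne_of_mem_card3 {V : Type*} [DecidableEq V] {u w z : V}
    (h : ({u, w, z} : Finset V).card = 3) : w ≠ z := by
  intro hwz
  subst hwz
  have he : ({u, w, w} : Finset V) = {u, w} := by ext a; simp
  rw [he] at h
  have h2 : ({u, w} : Finset V).card ≤ 2 :=
    (Finset.card_insert_le _ _).trans (by simp)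
  omega

lemma link_witness {V : Type*} [DecidableEq V] (H : Finset (Finset V))
    (h3 : ∀ e ∈ H, e.card = 3)
    (x y : V) (S : Finset V) (hxS : x ∉ S) (hyS : y ∉ S)
    (D : Finset V) (hDS : D ⊆ S)
    (hdom : DominatedSetOn S (linkAdj H S x y) D) :
    ∀ u ∈ D, ∃ w, w ≠ x ∧ w ≠ y ∧ w ∉ D ∧ ({u, w, x} : Finset V) ∈ H := by
  intro u hu
  rcases hdom u hu with h | ⟨w, hwS, hwD, h⟩
  · rcases h with ⟨hne, _⟩ | ⟨_, w, hwS, hwy, hmem⟩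
    · exact absurd rfl hne
    · exact ⟨w, ne_of_mem_card3 (h3 _ hmem), hwy, fun hd => hwS (hDS hd), hmem⟩
  · rcases h with ⟨hne, hmem⟩ | ⟨heq, _⟩
    · exact ⟨w, fun h => hxS (h ▸ hwS), fun h => hyS (h ▸ hwS), hwD, hmem⟩
    · exact absurd (heq ▸ hu) hwD

/-- If some `t`-set `D ⊆ S` is simultaneously dominated in the link graphs
`L_x(H,S,y)` and `L_y(H,S,x)`, then `H` contains a `K_{2,t}` trace. -/
theorem stmt4 {V : Type*} [DecidableEq V] (H : Finset (Finset V))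
    (h3 : ∀ e ∈ H, e.card = 3)
    (x y : V) (hxy : x ≠ y) (S : Finset V) (hxS : x ∉ S) (hyS : y ∉ S)
    (t : ℕ) (D : Finset V) (hDS : D ⊆ S) (hDcard : D.card = t)
    (hdomx : DominatedSetOn S (linkAdj H S x y) D)
    (hdomy : DominatedSetOn S (linkAdj H S y x) D) :
    ContainsTraceK2t H t := by
  have hwx := link_witness H h3 x y S hxS hyS D hDS hdomx
  have hwy := link_witness H h3 y x S hyS hxS D hDS hdomy
  choose wf hwf1 hwf2 hwf3 hwf4 using hwx
  choose wg hwg1 hwg2 hwg3 hwg4 using hwy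
  classical
  refine ⟨x, y, D, fun u => if h : u ∈ D then {u, wf u h, x} else ∅,
    fun u => if h : u ∈ D then {u, wg u h, y} else ∅,
    hxy, fun h => hxS (hDS h), fun h => hyS (hDS h), hDcard, ?_⟩
  intro u hu
  set T : Finset V := insert x (insert y D) with hT
  have hxT : x ∈ T := mem_insert_self _ _
  have hyT : y ∈ T := mem_insert_of_mem (mem_insert_self _ _)
  have huT : u ∈ T := mem_insert_of_mem (mem_insert_of_mem hu)
  have hwfT : wf u hu ∉ T := by
    simp only [hT, mem_insert]
    push_neg
    exact ⟨hwf1 u hu, hwf2 u hu, hwf3 u hu⟩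
  have hwgT : wg u hu ∉ T := by
    simp only [hT, mem_insert]
    push_neg
    exact ⟨hwg2 u hu, hwg1 u hu, hwg3 u hu⟩
  simp only [dif_pos hu]
  exact ⟨hwf4 u hu, hwg4 u hu, inter_lemma T u (wf u hu) x huT hxT hwfT,
    inter_lemma T u (wg u hu) y huT hyT hwgT⟩
end

section
/- Let t ≥ 2 and let H be a 3-uniform hypergraph on n vertices containing no trace of K_{2,t}. Let A be the set of edges of H that contain at least one pair of vertices with co-degree exactly 1 in H. Then for every pair of distinct vertices {x,y}, the number of edges of H \ A containing both x and y is at most 3t − 3. -/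
open Finset

/-- The co-degree of `x` and `y` in `H`: the number of edges containing both. -/
def codeg {V : Type*} [DecidableEq V] (H : Finset (Finset V)) (x y : V) : ℕ :=
  (H.filter fun e => x ∈ e ∧ y ∈ e).card

/-!
Let `Z` be the set of third vertices of the edges of `H \ A` through `x` and `y`. Since no pair
of such an edge has co-degree one, every `z ∈ Z` lies in a second edge `{x, z, a}` with `a ≠ y`
and in a second edge `{y, z, b}` with `b ≠ x`. If `t` vertices `u ∈ Z` can be chosen so that
each has such an `a` and such a `b` outside the chosen set, these edges form a trace of
`K_{2,t}`. Such a choice is made greedily: view `a` and `b` as neighbours of `z` in two graphs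
without isolated vertices on `Z`; there is always a vertex `u` which, removed together with at
most two further vertices, leaves no vertex isolated, because otherwise the leaves of the two
graphs would outnumber each other twice over. Each step uses up three vertices of `Z`, so
`3t - 2` vertices suffice.
-/

namespace K2tTrace

variable {V : Type*} [DecidableEq V]

/-- `W z` is the neighbourhood of `z` in a loopless graph in which no vertex of `Z` is isolated;
adjacency only has to be symmetric between vertices of `Z`. -/
structure IsNbhdOn (Z : Finset V) (W : V → Finset V) : Prop where
  nonempty : ∀ z ∈ Z, (W z).Nonempty
  notMem_self : ∀ z ∈ Z, z ∉ W z
  symm : ∀ z ∈ Z, ∀ w ∈ Z, w ∈ W z → z ∈ W w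

def leaves (Z : Finset V) (W : V → Finset V) (u : V) : Finset V :=
  Z.filter fun z => W z = {u}

lemma mem_leaves {Z : Finset V} {W : V → Finset V} {u z : V} :
    z ∈ leaves Z W u ↔ z ∈ Z ∧ W z = {u} :=
  mem_filter

lemma mul_card_le_card_biUnion_leaves {Z S : Finset V} {W : V → Finset V} {n : ℕ} (hS : S ⊆ Z)
    (h : ∀ u ∈ S, n ≤ #(leaves Z W u)) : n * #S ≤ #(Z.biUnion (leaves Z W)) := by
  have hdisj : (S : Set V).PairwiseDisjoint (leaves Z W) := by
    intro u _ v _ huv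
    refine disjoint_left.2 fun z hu hv => huv ?_
    rw [mem_leaves] at hu hv
    exact singleton_injective (hu.2.symm.trans hv.2)
  calc n * #S = ∑ _u ∈ S, n := by rw [sum_const, smul_eq_mul, mul_comm]
    _ ≤ ∑ u ∈ S, #(leaves Z W u) := sum_le_sum h
    _ = #(S.biUnion (leaves Z W)) := (card_biUnion hdisj).symm
    _ ≤ #(Z.biUnion (leaves Z W)) := card_le_card (biUnion_subset_biUnion_of_subset_left _ hS)

namespace IsNbhdOn

variable {Z : Finset V} {W : V → Finset V}

lemma erase (h : IsNbhdOn Z W) {Z' : Finset V} {u : V} (hZ' : Z' ⊆ Z) (hu : u ∉ Z')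
    (hleaf : ∀ z ∈ Z', W z ≠ {u}) : IsNbhdOn Z' fun z => (W z).erase u where
  nonempty z hz := by
    rw [nonempty_iff_ne_empty, Ne, erase_eq_empty_iff, not_or]
    exact ⟨(h.nonempty z (hZ' hz)).ne_empty, hleaf z hz⟩
  notMem_self z hz hzz := h.notMem_self z (hZ' hz) (mem_of_mem_erase hzz)
  symm z hz w hw hzw :=
    mem_erase.2
      ⟨ne_of_mem_of_not_mem hz hu, h.symm z (hZ' hz) w (hZ' hw) (mem_of_mem_erase hzw)⟩

lemma card_leaves_le_one (h : IsNbhdOn Z W) {z d : V} (hz : z ∈ Z) (hzd : W z = {d}) :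
    #(leaves Z W z) ≤ 1 := by
  refine (card_le_card fun z' hz' => ?_).trans (card_singleton d).le
  obtain ⟨hz'Z, hz'W⟩ := mem_leaves.1 hz'
  rw [← hzd]
  exact h.symm z' hz'Z z hz (by simp [hz'W])

lemma exists_mem_leaves_subset_singleton (h : IsNbhdOn Z W) {u : V} (hu : u ∈ Z)
    (hl : #(leaves Z W u) ≤ 1) : ∃ s ∈ W u, leaves Z W u ⊆ {s} := by
  obtain hempty | ⟨q, hq⟩ := (leaves Z W u).eq_empty_or_nonempty
  · obtain ⟨s, hs⟩ := h.nonempty u hu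
    exact ⟨s, hs, hempty ▸ empty_subset _⟩
  · obtain ⟨hqZ, hqW⟩ := mem_leaves.1 hq
    exact ⟨q, h.symm q hqZ u hu (by simp [hqW]),
      fun z hz => mem_singleton.2 (card_le_one.1 hl z hz q hq)⟩

end IsNbhdOn

/-- Removing `u` and the at most two vertices of `S` from `Z` isolates no vertex, while `u` keeps
a neighbour on each side outside what remains. -/
def Pickable (Z : Finset V) (Wx Wy : V → Finset V) (u : V) : Prop :=
  ∃ S : Finset V, #S ≤ 2 ∧ leaves Z Wx u ⊆ S ∧ leaves Z Wy u ⊆ S ∧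
    ¬ Wx u ⊆ Z \ S ∧ ¬ Wy u ⊆ Z \ S

section Selection

variable {Z : Finset V} {Wx Wy : V → Finset V}

lemma pickable_of_card_leaves_le_one (hx : IsNbhdOn Z Wx) (hy : IsNbhdOn Z Wy) {u : V}
    (hu : u ∈ Z) (hlx : #(leaves Z Wx u) ≤ 1) (hly : #(leaves Z Wy u) ≤ 1) :
    Pickable Z Wx Wy u := by
  obtain ⟨sx, hsx, hlsx⟩ := hx.exists_mem_leaves_subset_singleton hu hlx
  obtain ⟨sy, hsy, hlsy⟩ := hy.exists_mem_leaves_subset_singleton hu hly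
  refine ⟨{sx, sy}, card_le_two, hlsx.trans (by simp), hlsy.trans (by simp),
    fun h => (mem_sdiff.1 (h hsx)).2 (by simp), fun h => (mem_sdiff.1 (h hsy)).2 (by simp)⟩

lemma two_mul_card_biUnion_leaves_le (hx : IsNbhdOn Z Wx)
    (hnot : ∀ u ∈ Z, #(leaves Z Wx u) ≤ 1 → #(leaves Z Wy u) ≤ 1 → False) :
    2 * #(Z.biUnion (leaves Z Wx)) ≤ #(Z.biUnion (leaves Z Wy)) := by
  refine mul_card_le_card_biUnion_leaves (biUnion_subset.2 fun _ _ => filter_subset _ _)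
    fun z hz => ?_
  obtain ⟨d, -, hzd⟩ := mem_biUnion.1 hz
  rw [mem_leaves] at hzd
  by_contra! hlt
  exact hnot z hzd.1 (hx.card_leaves_le_one hzd.1 hzd.2) (by omega)

/-- Every vertex of `Z` that is not pickable has two leaves in one graph as soon as it is a leaf
of the other, so neither graph can have leaves at all. -/
lemma exists_pickable (hx : IsNbhdOn Z Wx) (hy : IsNbhdOn Z Wy) (hZ : Z.Nonempty) :
    ∃ u ∈ Z, Pickable Z Wx Wy u := by
  by_contra! hnot
  have hnot' : ∀ u ∈ Z, #(leaves Z Wx u) ≤ 1 → #(leaves Z Wy u) ≤ 1 → False :=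
    fun u hu hlx hly => hnot u hu (pickable_of_card_leaves_le_one hx hy hu hlx hly)
  have hxy := two_mul_card_biUnion_leaves_le hx hnot'
  have hyx := two_mul_card_biUnion_leaves_le hy fun u hu hly hlx => hnot' u hu hlx hly
  obtain ⟨u, hu⟩ := hZ
  have hlx := card_le_card (subset_biUnion_of_mem (leaves Z Wx) hu)
  have hly := card_le_card (subset_biUnion_of_mem (leaves Z Wy) hu)
  exact hnot' u hu (by omega) (by omega)

theorem exists_subset_card_eq_forall_not_subset (hx : IsNbhdOn Z Wx) (hy : IsNbhdOn Z Wy)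
    (t : ℕ) (hZ : 3 * t ≤ #Z + 2) :
    ∃ D ⊆ Z, #D = t ∧ ∀ u ∈ D, ¬ Wx u ⊆ D ∧ ¬ Wy u ⊆ D := by
  induction t generalizing Z Wx Wy with
  | zero => exact ⟨∅, empty_subset _, card_empty, by simp⟩
  | succ t ih =>
    obtain ⟨u, hu, S, hS, hlx, hly, hux, huy⟩ := exists_pickable hx hy (card_pos.1 (by omega))
    have hcard : #Z ≤ #(Z \ insert u S) + 3 :=
      (card_le_card_sdiff_add_card (t := insert u S)).trans (by have := card_insert_le u S; omega)
    set Z' := Z \ insert u S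
    have hZ' : Z' ⊆ Z := sdiff_subset
    have huZ' : u ∉ Z' := fun h => (mem_sdiff.1 h).2 (mem_insert_self u S)
    have hleaf : ∀ W : V → Finset V, leaves Z W u ⊆ S → ∀ z ∈ Z', W z ≠ {u} :=
      fun W hl z hz hzu =>
        (mem_sdiff.1 hz).2 (mem_insert_of_mem (hl (mem_leaves.2 ⟨hZ' hz, hzu⟩)))
    obtain ⟨D, hDZ', hD, hDgood⟩ := ih (hx.erase hZ' huZ' (hleaf Wx hlx))
      (hy.erase hZ' huZ' (hleaf Wy hly)) (by omega)
    have hDS : D ⊆ Z \ S := hDZ'.trans (sdiff_subset_sdiff le_rfl (subset_insert u S))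
    have hnew : ∀ W, IsNbhdOn Z W → ¬ W u ⊆ Z \ S → ¬ W u ⊆ insert u D := by
      intro W hW hWS h
      rw [subset_insert_iff, erase_eq_of_notMem (hW.notMem_self u hu)] at h
      exact hWS (h.trans hDS)
    have hold : ∀ (W : V → Finset V) v, ¬ (W v).erase u ⊆ D → ¬ W v ⊆ insert u D :=
      fun W v h h' => h (subset_insert_iff.1 h')
    refine ⟨insert u D, insert_subset hu (hDZ'.trans hZ'),
      by rw [card_insert_of_notMem fun h => huZ' (hDZ' h), hD], fun v hv => ?_⟩
    rcases mem_insert.1 hv with rfl | hv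
    · exact ⟨hnew Wx hx hux, hnew Wy hy huy⟩
    · exact ⟨hold Wx v (hDgood v hv).1, hold Wy v (hDgood v hv).2⟩

end Selection

section Hypergraph

variable {H : Finset (Finset V)}

lemma ne_of_card_triple_eq_three {a b c : V} (h : #({a, b, c} : Finset V) = 3) :
    a ≠ b ∧ a ≠ c ∧ b ≠ c := by
  refine ⟨?_, ?_, ?_⟩ <;> rintro rfl <;>
    simp only [insert_eq_of_mem, mem_insert, mem_singleton, true_or, or_true] at h <;>
    exact (card_le_two.trans_lt (by norm_num)).ne h

lemma sdiff_pair_nonempty {e : Finset V} (he : #e = 3) (a b : V) : (e \ {a, b}).Nonempty := by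
  obtain ⟨c, hc, hcab⟩ := exists_mem_notMem_of_card_lt_card (s := {a, b}) (t := e)
    (by rw [he]; exact card_le_two.trans_lt (by norm_num))
  exact ⟨c, mem_sdiff.2 ⟨hc, hcab⟩⟩

lemma eq_triple_of_mem_sdiff {e : Finset V} (he : #e = 3) {a b c : V} (ha : a ∈ e) (hb : b ∈ e)
    (hab : a ≠ b) (hc : c ∈ e \ {a, b}) : e = {a, b, c} := by
  simp only [mem_sdiff, mem_insert, mem_singleton, not_or] at hc
  refine (eq_of_subset_of_card_le ?_ ?_).symm
  · simp [insert_subset_iff, *]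
  · rw [he, card_insert_of_notMem (by simp [hab, Ne.symm hc.2.1]), card_pair (Ne.symm hc.2.2)]

lemma triple_inter_eq_pair {a b c : V} {s : Finset V} (ha : a ∈ s) (hb : b ∈ s) (hc : c ∉ s) :
    {a, b, c} ∩ s = {a, b} := by
  rw [insert_inter_of_mem ha, insert_inter_of_mem hb, singleton_inter_of_notMem hc]
  rfl

/-- The neighbours of `z` in the link graph of `x`, with `y` deleted. -/
def linkNbhd (H : Finset (Finset V)) (x y z : V) : Finset V :=
  (H.biUnion id).filter fun w => w ≠ y ∧ {x, z, w} ∈ H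

lemma mem_linkNbhd {x y z w : V} : w ∈ linkNbhd H x y z ↔ w ≠ y ∧ {x, z, w} ∈ H := by
  simp only [linkNbhd, mem_filter, mem_biUnion, id, and_iff_right_iff_imp]
  exact fun h => ⟨_, h.2, by simp⟩

lemma isNbhdOn_linkNbhd (h3 : ∀ e ∈ H, #e = 3) {x y : V} {Z : Finset V}
    (hZ : ∀ z ∈ Z, {x, y, z} ∈ H ∧ codeg H x z ≠ 1) : IsNbhdOn Z (linkNbhd H x y) where
  nonempty z hz := by
    obtain ⟨he, hcodeg⟩ := hZ z hz
    obtain ⟨-, hxz, -⟩ := ne_of_card_triple_eq_three (h3 _ he)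
    have hpos : 0 < codeg H x z := card_pos.2 ⟨{x, y, z}, by simp [he]⟩
    obtain ⟨f, hf, hfe⟩ := exists_mem_ne (by omega : 1 < codeg H x z) ({x, y, z} : Finset V)
    obtain ⟨hfH, hxf, hzf⟩ := mem_filter.1 hf
    obtain ⟨w, hw⟩ := sdiff_pair_nonempty (h3 f hfH) x z
    have hfw : f = {x, z, w} := eq_triple_of_mem_sdiff (h3 f hfH) hxf hzf hxz hw
    refine ⟨w, mem_linkNbhd.2 ⟨fun hwy => hfe ?_, hfw ▸ hfH⟩⟩
    rw [hfw, hwy, pair_comm]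
  notMem_self z hz h := by
    obtain ⟨-, hzz⟩ := mem_linkNbhd.1 h
    simpa using (ne_of_card_triple_eq_three (h3 _ hzz)).2.2
  symm z hz w _ h := by
    obtain ⟨-, hw⟩ := mem_linkNbhd.1 h
    refine mem_linkNbhd.2 ⟨(ne_of_card_triple_eq_three (h3 _ (hZ z hz).1)).2.2.symm, ?_⟩
    rwa [pair_comm]

lemma codeg_ne_one_of_mem_sdiff {A : Finset (Finset V)}
    (hA : ∀ e, e ∈ A ↔ e ∈ H ∧ ∃ a ∈ e, ∃ b ∈ e, a ≠ b ∧ codeg H a b = 1) {e : Finset V}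
    (he : e ∈ H \ A) {a b : V} (ha : a ∈ e) (hb : b ∈ e) (hab : a ≠ b) : codeg H a b ≠ 1 :=
  fun h => (mem_sdiff.1 he).2 ((hA e).2 ⟨(mem_sdiff.1 he).1, a, ha, b, hb, hab, h⟩)

lemma containsTraceK2t_of_forall_not_subset (h3 : ∀ e ∈ H, #e = 3) {x y : V} {D : Finset V}
    (hxy : x ≠ y) (hxD : x ∉ D) (hyD : y ∉ D) (hDx : ∀ u ∈ D, ¬ linkNbhd H x y u ⊆ D)
    (hDy : ∀ u ∈ D, ¬ linkNbhd H y x u ⊆ D) : ContainsTraceK2t H #D := by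
  have hpick : ∀ u, ∃ a b : V, u ∈ D →
      (a ∈ linkNbhd H x y u ∧ a ∉ D) ∧ (b ∈ linkNbhd H y x u ∧ b ∉ D) := by
    intro u
    by_cases hu : u ∈ D
    · obtain ⟨a, ha⟩ := not_subset.1 (hDx u hu)
      obtain ⟨b, hb⟩ := not_subset.1 (hDy u hu)
      exact ⟨a, b, fun _ => ⟨ha, hb⟩⟩
    · exact ⟨u, u, fun h => absurd h hu⟩
  choose a b hab using hpick
  refine ⟨x, y, D, fun u => {x, u, a u}, fun u => {y, u, b u}, hxy, hxD, hyD, rfl,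
    fun u hu => ?_⟩
  obtain ⟨⟨ha, haD⟩, hb, hbD⟩ := hab u hu
  rw [mem_linkNbhd] at ha hb
  have hxa := (ne_of_card_triple_eq_three (h3 _ ha.2)).2.1
  have hyb := (ne_of_card_triple_eq_three (h3 _ hb.2)).2.1
  refine ⟨ha.2, hb.2, triple_inter_eq_pair (by simp) (by simp [hu]) ?_,
    triple_inter_eq_pair (by simp) (by simp [hu]) ?_⟩
  · simp [Ne.symm hxa, ha.1, haD]
  · simp [Ne.symm hyb, hb.1, hbD]

end Hypergraph

end K2tTrace

open K2tTrace

theorem stmt6_general {V : Type*} [DecidableEq V] (t : ℕ)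
    (H : Finset (Finset V)) (h3 : ∀ e ∈ H, e.card = 3)
    (hfree : ¬ ContainsTraceK2t H t)
    (A : Finset (Finset V))
    (hA : ∀ e, e ∈ A ↔ e ∈ H ∧ ∃ a ∈ e, ∃ b ∈ e, a ≠ b ∧ codeg H a b = 1)
    (x y : V) (hxy : x ≠ y) :
    ((H \ A).filter fun e => x ∈ e ∧ y ∈ e).card ≤ 3 * t - 3 := by
  set P := (H \ A).filter fun e => x ∈ e ∧ y ∈ e
  set Z := P.biUnion fun e => e \ {x, y}
  have hPZ : #P ≤ #Z := by
    refine (card_le_card fun e he => ?_).trans (card_image_le (f := fun z => {x, y, z}))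
    obtain ⟨heHA, hxe, hye⟩ := mem_filter.1 he
    have he3 := h3 e (mem_sdiff.1 heHA).1
    obtain ⟨z, hz⟩ := sdiff_pair_nonempty he3 x y
    exact mem_image.2
      ⟨z, mem_biUnion.2 ⟨e, he, hz⟩, (eq_triple_of_mem_sdiff he3 hxe hye hxy hz).symm⟩
  have hZ : ∀ z ∈ Z, {x, y, z} ∈ H ∧ codeg H x z ≠ 1 ∧ codeg H y z ≠ 1 := by
    intro z hz
    obtain ⟨e, he, hze⟩ := mem_biUnion.1 hz
    obtain ⟨heHA, hxe, hye⟩ := mem_filter.1 he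
    obtain rfl := eq_triple_of_mem_sdiff (h3 e (mem_sdiff.1 heHA).1) hxe hye hxy hze
    simp only [mem_sdiff, mem_insert, mem_singleton, not_or] at hze
    exact ⟨(mem_sdiff.1 heHA).1,
      codeg_ne_one_of_mem_sdiff hA heHA (by simp) (by simp) (Ne.symm hze.2.1),
      codeg_ne_one_of_mem_sdiff hA heHA (by simp) (by simp) (Ne.symm hze.2.2)⟩
  have hxZ : IsNbhdOn Z (linkNbhd H x y) :=
    isNbhdOn_linkNbhd h3 fun z hz => ⟨(hZ z hz).1, (hZ z hz).2.1⟩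
  have hyZ : IsNbhdOn Z (linkNbhd H y x) :=
    isNbhdOn_linkNbhd h3 fun z hz => ⟨insert_comm x y {z} ▸ (hZ z hz).1, (hZ z hz).2.2⟩
  by_contra! hlarge
  obtain ⟨D, hDZ, rfl, hD⟩ := exists_subset_card_eq_forall_not_subset hxZ hyZ t (by omega)
  have hxD : x ∉ D := fun h => by simpa [Z] using hDZ h
  have hyD : y ∉ D := fun h => by simpa [Z] using hDZ h
  exact hfree (containsTraceK2t_of_forall_not_subset h3 hxy hxD hyD (fun u hu => (hD u hu).1)
    fun u hu => (hD u hu).2)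

/-- Let `t ≥ 2` and `H` a 3-uniform hypergraph with no `K_{2,t}` trace.  If `A`
is the set of edges of `H` containing a pair of co-degree exactly 1, then every
pair of distinct vertices lies in at most `3t - 3` edges of `H \ A`. -/
theorem stmt6 {V : Type*} [DecidableEq V] (t : ℕ) (ht : 2 ≤ t)
    (H : Finset (Finset V)) (h3 : ∀ e ∈ H, e.card = 3)
    (hfree : ¬ ContainsTraceK2t H t)
    (A : Finset (Finset V))
    (hA : ∀ e, e ∈ A ↔ e ∈ H ∧ ∃ a ∈ e, ∃ b ∈ e, a ≠ b ∧ codeg H a b = 1)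
    (x y : V) (hxy : x ≠ y) :
    ((H \ A).filter fun e => x ∈ e ∧ y ∈ e).card ≤ 3 * t - 3 :=
  stmt6_general t H h3 hfree A hA x y hxy
end

section
/- Let H be a 3-uniform hypergraph on n vertices containing no trace of C_4 = K_{2,2}. Let A be the set of edges of H containing at least one pair with co-degree exactly 1 in H. Then for every pair of distinct vertices {x,y}, the number of edges of H \ A containing both x and y is at most 2. -/
open Finset

lemma card3 {V : Type*} [DecidableEq V] {p q r : V} (h1 : p ≠ q) (h2 : p ≠ r) (h3 : q ≠ r) :
    ({p, q, r} : Finset V).card = 3 := by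
  rw [card_insert_of_notMem (by simp [h1, h2]), card_insert_of_notMem (by simp [h3]),
    card_singleton]

lemma keyAux {V : Type*} [DecidableEq V] (H : Finset (Finset V)) (h3 : ∀ e ∈ H, e.card = 3)
    (a b zi zj : V) (e : Finset V)
    (heH : e ∈ H) (hae : a ∈ e) (hbe : b ∈ e) (hze : zi ∈ e)
    (hab : a ≠ b) (hazi : a ≠ zi) (hbzi : b ≠ zi) (hazj : a ≠ zj) (hij : zi ≠ zj)
    (hcd : codeg H a zi ≠ 1) :
    (∃ f ∈ H, a ∈ f ∧ zi ∈ f ∧ b ∉ f ∧ zj ∉ f) ∨ ({a, zi, zj} : Finset V) ∈ H := by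
  unfold codeg at hcd
  have h1 : e ∈ H.filter (fun f => a ∈ f ∧ zi ∈ f) := mem_filter.2 ⟨heH, hae, hze⟩
  have hcard : 1 < (H.filter fun f => a ∈ f ∧ zi ∈ f).card := by
    have := Finset.card_pos.2 ⟨e, h1⟩
    omega
  obtain ⟨f, hf, hfe⟩ := Finset.exists_mem_ne hcard e
  rw [mem_filter] at hf
  obtain ⟨hfH, haf, hzf⟩ := hf
  have heeq : e = {a, b, zi} := by
    refine (Finset.eq_of_subset_of_card_le ?_ ?_).symm
    · intro v hv; simp at hv; rcases hv with rfl | rfl | rfl <;> assumption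
    · rw [h3 e heH, card3 hab hazi hbzi]
  have hbf : b ∉ f := by
    intro hbf
    apply hfe
    have : f = {a, b, zi} := by
      refine (Finset.eq_of_subset_of_card_le ?_ ?_).symm
      · intro v hv; simp at hv; rcases hv with rfl | rfl | rfl <;> assumption
      · rw [h3 f hfH, card3 hab hazi hbzi]
    rw [this, ← heeq]
  by_cases hzj : zj ∈ f
  · right
    have : f = {a, zi, zj} := by
      refine (Finset.eq_of_subset_of_card_le ?_ ?_).symm
      · intro v hv; simp at hv; rcases hv with rfl | rfl | rfl <;> assumption
      · rw [h3 f hfH, card3 hazi hazj hij]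
    rwa [← this]
  · exact Or.inl ⟨f, hfH, haf, hzf, hbf, hzj⟩

lemma buildTrace {V : Type*} [DecidableEq V] (H : Finset (Finset V)) (a b u1 u2 : V)
    (f1 f2 g1 g2 : Finset V)
    (hab : a ≠ b) (hau1 : a ≠ u1) (hau2 : a ≠ u2) (hbu1 : b ≠ u1) (hbu2 : b ≠ u2)
    (hu : u1 ≠ u2)
    (hf1H : f1 ∈ H) (f1a : a ∈ f1) (f1u : u1 ∈ f1) (f1b : b ∉ f1) (f1u2 : u2 ∉ f1)
    (hf2H : f2 ∈ H) (f2a : a ∈ f2) (f2u : u2 ∈ f2) (f2b : b ∉ f2) (f2u1 : u1 ∉ f2)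
    (hg1H : g1 ∈ H) (g1b : b ∈ g1) (g1u : u1 ∈ g1) (g1a : a ∉ g1) (g1u2 : u2 ∉ g1)
    (hg2H : g2 ∈ H) (g2b : b ∈ g2) (g2u : u2 ∈ g2) (g2a : a ∉ g2) (g2u1 : u1 ∉ g2) :
    ContainsTraceK2t H 2 := by
  have key : ∀ (f : Finset V) (c d : V), c ∈ f → d ∈ f →
      (c = a ∨ c = b ∨ c = u1 ∨ c = u2) → (d = a ∨ d = b ∨ d = u1 ∨ d = u2) →
      (∀ v, v ∈ f → (v = a ∨ v = b ∨ v = u1 ∨ v = u2) → v = c ∨ v = d) →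
      f ∩ (insert a (insert b ({u1, u2} : Finset V))) = {c, d} := by
    intro f c d hc hd hcS hdS h
    ext v
    simp only [mem_inter, mem_insert, mem_singleton]
    constructor
    · rintro ⟨h1, h2⟩; exact h v h1 h2
    · rintro (rfl | rfl)
      · exact ⟨hc, hcS⟩
      · exact ⟨hd, hdS⟩
  refine ⟨a, b, {u1, u2}, (fun w => if w = u1 then f1 else f2),
    (fun w => if w = u1 then g1 else g2), hab, by simp [hau1, hau2], by simp [hbu1, hbu2],
    by rw [card_insert_of_notMem (by simp [hu]), card_singleton], ?_⟩
  intro u hu'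
  simp only [mem_insert, mem_singleton] at hu'
  rcases hu' with rfl | rfl
  · have e1 : (if u = u then f1 else f2) = f1 := if_pos rfl
    have e2 : (if u = u then g1 else g2) = g1 := if_pos rfl
    refine ⟨by show (if u = u then f1 else f2) ∈ H; rw [e1]; exact hf1H,
      by show (if u = u then g1 else g2) ∈ H; rw [e2]; exact hg1H, ?_, ?_⟩
    · show (if u = u then f1 else f2) ∩ _ = _
      rw [e1]
      apply key f1 a u f1a f1u (Or.inl rfl) (Or.inr (Or.inr (Or.inl rfl)))
      intro v hv hvS
      rcases hvS with h | h | h | h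
      · exact Or.inl h
      · exact absurd (h ▸ hv) f1b
      · exact Or.inr h
      · exact absurd (h ▸ hv) f1u2
    · show (if u = u then g1 else g2) ∩ _ = _
      rw [e2]
      apply key g1 b u g1b g1u (Or.inr (Or.inl rfl)) (Or.inr (Or.inr (Or.inl rfl)))
      intro v hv hvS
      rcases hvS with h | h | h | h
      · exact absurd (h ▸ hv) g1a
      · exact Or.inl h
      · exact Or.inr h
      · exact absurd (h ▸ hv) g1u2
  · have e1 : (if u = u1 then f1 else f2) = f2 := if_neg hu.symm
    have e2 : (if u = u1 then g1 else g2) = g2 := if_neg hu.symm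
    refine ⟨by show (if u = u1 then f1 else f2) ∈ H; rw [e1]; exact hf2H,
      by show (if u = u1 then g1 else g2) ∈ H; rw [e2]; exact hg2H, ?_, ?_⟩
    · show (if u = u1 then f1 else f2) ∩ _ = _
      rw [e1]
      apply key f2 a u f2a f2u (Or.inl rfl) (Or.inr (Or.inr (Or.inr rfl)))
      intro v hv hvS
      rcases hvS with h | h | h | h
      · exact Or.inl h
      · exact absurd (h ▸ hv) f2b
      · exact absurd (h ▸ hv) f2u1
      · exact Or.inr h
    · show (if u = u1 then g1 else g2) ∩ _ = _
      rw [e2]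
      apply key g2 b u g2b g2u (Or.inr (Or.inl rfl)) (Or.inr (Or.inr (Or.inr rfl)))
      intro v hv hvS
      rcases hvS with h | h | h | h
      · exact absurd (h ▸ hv) g2a
      · exact Or.inl h
      · exact absurd (h ▸ hv) g2u1
      · exact Or.inr h

/-- Let `H` be a 3-uniform hypergraph with no trace of `C₄ = K_{2,2}`.  If `A`
is the set of edges of `H` containing a pair of co-degree exactly 1, then every
pair of distinct vertices lies in at most `2` edges of `H \ A`. -/
theorem stmt7 {V : Type*} [DecidableEq V]
    (H : Finset (Finset V)) (h3 : ∀ e ∈ H, e.card = 3)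
    (hfree : ¬ ContainsTraceK2t H 2)
    (A : Finset (Finset V))
    (hA : ∀ e, e ∈ A ↔ e ∈ H ∧ ∃ a ∈ e, ∃ b ∈ e, a ≠ b ∧ codeg H a b = 1)
    (x y : V) (hxy : x ≠ y) :
    ((H \ A).filter fun e => x ∈ e ∧ y ∈ e).card ≤ 2 := by
  by_contra hc
  push_neg at hc
  rw [Finset.two_lt_card_iff] at hc
  obtain ⟨e1, e2, e3, he1, he2, he3, h12, h13, h23⟩ := hc
  simp only [mem_filter, mem_sdiff] at he1 he2 he3
  obtain ⟨⟨he1H, he1A⟩, hx1, hy1⟩ := he1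
  obtain ⟨⟨he2H, he2A⟩, hx2, hy2⟩ := he2
  obtain ⟨⟨he3H, he3A⟩, hx3, hy3⟩ := he3
  -- extract third vertices
  have third : ∀ e ∈ H, x ∈ e → y ∈ e → ∃ z, z ≠ x ∧ z ≠ y ∧ e = {x, y, z} := by
    intro e heH hxe hye
    have hsub : ({x, y} : Finset V) ⊆ e := by
      intro v hv; simp only [mem_insert, mem_singleton] at hv
      rcases hv with rfl | rfl <;> assumption
    have h2 : ({x, y} : Finset V).card = 2 := card_pair hxy
    have h1 : (e \ {x, y}).card = 1 := by rw [card_sdiff_of_subset hsub, h3 e heH, h2]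
    obtain ⟨z, hz⟩ := Finset.card_eq_one.1 h1
    have hzmem : z ∈ e \ {x, y} := hz ▸ mem_singleton_self z
    rw [mem_sdiff, mem_insert, mem_singleton] at hzmem
    obtain ⟨hze, hznot⟩ := hzmem
    push_neg at hznot
    refine ⟨z, hznot.1, hznot.2, ?_⟩
    refine (Finset.eq_of_subset_of_card_le ?_ ?_).symm
    · intro v hv; simp only [mem_insert, mem_singleton] at hv
      rcases hv with rfl | rfl | rfl <;> assumption
    · rw [h3 e heH, card3 hxy (Ne.symm hznot.1) (Ne.symm hznot.2)]
  obtain ⟨z1, hz1x, hz1y, he1eq⟩ := third e1 he1H hx1 hy1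
  obtain ⟨z2, hz2x, hz2y, he2eq⟩ := third e2 he2H hx2 hy2
  obtain ⟨z3, hz3x, hz3y, he3eq⟩ := third e3 he3H hx3 hy3
  have hz12 : z1 ≠ z2 := fun h => h12 (by rw [he1eq, he2eq, h])
  have hz13 : z1 ≠ z3 := fun h => h13 (by rw [he1eq, he3eq, h])
  have hz23 : z2 ≠ z3 := fun h => h23 (by rw [he2eq, he3eq, h])
  have hz1e : z1 ∈ e1 := by rw [he1eq]; simp
  have hz2e : z2 ∈ e2 := by rw [he2eq]; simp
  have hz3e : z3 ∈ e3 := by rw [he3eq]; simp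
  -- codegree conditions
  have notA : ∀ e, e ∈ H → e ∉ A → ∀ a ∈ e, ∀ b ∈ e, a ≠ b → codeg H a b ≠ 1 := by
    intro e heH heA a ha b hb hab h1
    exact heA ((hA e).2 ⟨heH, a, ha, b, hb, hab, h1⟩)
  -- key dichotomies
  have kx : ∀ (zi zj : V) (e : Finset V), e ∈ H → e ∉ A → x ∈ e → y ∈ e → zi ∈ e →
      zi ≠ x → zi ≠ y → x ≠ zj → zi ≠ zj →
      (∃ f ∈ H, x ∈ f ∧ zi ∈ f ∧ y ∉ f ∧ zj ∉ f) ∨ ({x, zi, zj} : Finset V) ∈ H := by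
    intro zi zj e heH heA hxe hye hze h1 h2 h3' h4
    exact keyAux H h3 x y zi zj e heH hxe hye hze hxy (Ne.symm h1) (Ne.symm h2) h3' h4
      (notA e heH heA x hxe zi hze (Ne.symm h1))
  have ky : ∀ (zi zj : V) (e : Finset V), e ∈ H → e ∉ A → x ∈ e → y ∈ e → zi ∈ e →
      zi ≠ x → zi ≠ y → y ≠ zj → zi ≠ zj →
      (∃ f ∈ H, y ∈ f ∧ zi ∈ f ∧ x ∉ f ∧ zj ∉ f) ∨ ({y, zi, zj} : Finset V) ∈ H := by
    intro zi zj e heH heA hxe hye hze h1 h2 h3' h4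
    exact keyAux H h3 y x zi zj e heH hye hxe hze (Ne.symm hxy) (Ne.symm h2) (Ne.symm h1) h3' h4
      (notA e heH heA y hye zi hze (Ne.symm h2))
  have pc : ∀ a p q : V, ({a, p, q} : Finset V) = {a, q, p} := by
    intro a p q; rw [Finset.pair_comm]
  -- six dichotomies (good first)
  have X12 : ((∃ f ∈ H, x ∈ f ∧ z1 ∈ f ∧ y ∉ f ∧ z2 ∉ f) ∧
      (∃ f ∈ H, x ∈ f ∧ z2 ∈ f ∧ y ∉ f ∧ z1 ∉ f)) ∨ ({x, z1, z2} : Finset V) ∈ H := by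
    rcases kx z1 z2 e1 he1H he1A hx1 hy1 hz1e hz1x hz1y (Ne.symm hz2x) hz12 with g | e
    · rcases kx z2 z1 e2 he2H he2A hx2 hy2 hz2e hz2x hz2y (Ne.symm hz1x) hz12.symm with g' | e
      · exact Or.inl ⟨g, g'⟩
      · right; rwa [pc] at e
    · exact Or.inr e
  have X13 : ((∃ f ∈ H, x ∈ f ∧ z1 ∈ f ∧ y ∉ f ∧ z3 ∉ f) ∧
      (∃ f ∈ H, x ∈ f ∧ z3 ∈ f ∧ y ∉ f ∧ z1 ∉ f)) ∨ ({x, z1, z3} : Finset V) ∈ H := by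
    rcases kx z1 z3 e1 he1H he1A hx1 hy1 hz1e hz1x hz1y (Ne.symm hz3x) hz13 with g | e
    · rcases kx z3 z1 e3 he3H he3A hx3 hy3 hz3e hz3x hz3y (Ne.symm hz1x) hz13.symm with g' | e
      · exact Or.inl ⟨g, g'⟩
      · right; rwa [pc] at e
    · exact Or.inr e
  have X23 : ((∃ f ∈ H, x ∈ f ∧ z2 ∈ f ∧ y ∉ f ∧ z3 ∉ f) ∧
      (∃ f ∈ H, x ∈ f ∧ z3 ∈ f ∧ y ∉ f ∧ z2 ∉ f)) ∨ ({x, z2, z3} : Finset V) ∈ H := by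
    rcases kx z2 z3 e2 he2H he2A hx2 hy2 hz2e hz2x hz2y (Ne.symm hz3x) hz23 with g | e
    · rcases kx z3 z2 e3 he3H he3A hx3 hy3 hz3e hz3x hz3y (Ne.symm hz2x) hz23.symm with g' | e
      · exact Or.inl ⟨g, g'⟩
      · right; rwa [pc] at e
    · exact Or.inr e
  have Y12 : ((∃ f ∈ H, y ∈ f ∧ z1 ∈ f ∧ x ∉ f ∧ z2 ∉ f) ∧
      (∃ f ∈ H, y ∈ f ∧ z2 ∈ f ∧ x ∉ f ∧ z1 ∉ f)) ∨ ({y, z1, z2} : Finset V) ∈ H := by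
    rcases ky z1 z2 e1 he1H he1A hx1 hy1 hz1e hz1x hz1y (Ne.symm hz2y) hz12 with g | e
    · rcases ky z2 z1 e2 he2H he2A hx2 hy2 hz2e hz2x hz2y (Ne.symm hz1y) hz12.symm with g' | e
      · exact Or.inl ⟨g, g'⟩
      · right; rwa [pc] at e
    · exact Or.inr e
  have Y13 : ((∃ f ∈ H, y ∈ f ∧ z1 ∈ f ∧ x ∉ f ∧ z3 ∉ f) ∧
      (∃ f ∈ H, y ∈ f ∧ z3 ∈ f ∧ x ∉ f ∧ z1 ∉ f)) ∨ ({y, z1, z3} : Finset V) ∈ H := by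
    rcases ky z1 z3 e1 he1H he1A hx1 hy1 hz1e hz1x hz1y (Ne.symm hz3y) hz13 with g | e
    · rcases ky z3 z1 e3 he3H he3A hx3 hy3 hz3e hz3x hz3y (Ne.symm hz1y) hz13.symm with g' | e
      · exact Or.inl ⟨g, g'⟩
      · right; rwa [pc] at e
    · exact Or.inr e
  have Y23 : ((∃ f ∈ H, y ∈ f ∧ z2 ∈ f ∧ x ∉ f ∧ z3 ∉ f) ∧
      (∃ f ∈ H, y ∈ f ∧ z3 ∈ f ∧ x ∉ f ∧ z2 ∉ f)) ∨ ({y, z2, z3} : Finset V) ∈ H := by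
    rcases ky z2 z3 e2 he2H he2A hx2 hy2 hz2e hz2x hz2y (Ne.symm hz3y) hz23 with g | e
    · rcases ky z3 z2 e3 he3H he3A hx3 hy3 hz3e hz3x hz3y (Ne.symm hz2y) hz23.symm with g' | e
      · exact Or.inl ⟨g, g'⟩
      · right; rwa [pc] at e
    · exact Or.inr e
  -- trace constructors
  have T1 : ∀ zi zj : V, zi ≠ zj → zi ≠ x → zi ≠ y → zj ≠ x → zj ≠ y →
      (∃ f ∈ H, x ∈ f ∧ zi ∈ f ∧ y ∉ f ∧ zj ∉ f) → (∃ f ∈ H, x ∈ f ∧ zj ∈ f ∧ y ∉ f ∧ zi ∉ f) →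
      (∃ f ∈ H, y ∈ f ∧ zi ∈ f ∧ x ∉ f ∧ zj ∉ f) → (∃ f ∈ H, y ∈ f ∧ zj ∈ f ∧ x ∉ f ∧ zi ∉ f) →
      False := by
    rintro zi zj hij hix hiy hjx hjy ⟨f1, hf1, hf1x, hf1i, hf1y, hf1j⟩
      ⟨f2, hf2, hf2x, hf2j, hf2y, hf2i⟩ ⟨g1, hg1, hg1y, hg1i, hg1x, hg1j⟩
      ⟨g2, hg2, hg2y, hg2j, hg2x, hg2i⟩
    exact hfree (buildTrace H x y zi zj f1 f2 g1 g2 hxy (Ne.symm hix) (Ne.symm hjx)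
      (Ne.symm hiy) (Ne.symm hjy) hij hf1 hf1x hf1i hf1y hf1j hf2 hf2x hf2j hf2y hf2i
      hg1 hg1y hg1i hg1x hg1j hg2 hg2y hg2j hg2x hg2i)
  have T2x : ∀ za zb zc : V, za ≠ zb → za ≠ zc → zb ≠ zc →
      za ≠ x → za ≠ y → zb ≠ x → zb ≠ y → zc ≠ x → zc ≠ y →
      ({x, y, za} : Finset V) ∈ H → ({x, y, zc} : Finset V) ∈ H →
      ({x, za, zb} : Finset V) ∈ H → ({x, zb, zc} : Finset V) ∈ H → False := by
    intro za zb zc hab hac hbc hax hay hbx hby hcx hcy hA' hC hAB hBC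
    refine hfree (buildTrace H za zc y zb {x, y, za} {x, za, zb} {x, y, zc} {x, zb, zc}
      hac hay hab hcy hbc.symm (Ne.symm hby)
      hA' (by simp) (by simp) ?_ ?_ hAB (by simp) (by simp) ?_ ?_
      hC (by simp) (by simp) ?_ ?_ hBC (by simp) (by simp) ?_ ?_)
    · simp [hcx, hcy, Ne.symm hac]
    · simp [hbx, hby, Ne.symm hab]
    · simp [hcx, Ne.symm hac, Ne.symm hbc]
    · simp [Ne.symm hxy, Ne.symm hay, Ne.symm hby]
    · simp [hax, hay, hac]
    · simp [hbx, hby, hbc]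
    · simp [hax, hab, hac]
    · simp [Ne.symm hxy, Ne.symm hby, Ne.symm hcy]
  have T2y : ∀ za zb zc : V, za ≠ zb → za ≠ zc → zb ≠ zc →
      za ≠ x → za ≠ y → zb ≠ x → zb ≠ y → zc ≠ x → zc ≠ y →
      ({x, y, za} : Finset V) ∈ H → ({x, y, zc} : Finset V) ∈ H →
      ({y, za, zb} : Finset V) ∈ H → ({y, zb, zc} : Finset V) ∈ H → False := by
    intro za zb zc hab hac hbc hax hay hbx hby hcx hcy hA' hC hAB hBC
    refine hfree (buildTrace H za zc x zb {x, y, za} {y, za, zb} {x, y, zc} {y, zb, zc}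
      hac hax hab hcx hbc.symm (Ne.symm hbx)
      hA' (by simp) (by simp) ?_ ?_ hAB (by simp) (by simp) ?_ ?_
      hC (by simp) (by simp) ?_ ?_ hBC (by simp) (by simp) ?_ ?_)
    · simp [hcx, hcy, Ne.symm hac]
    · simp [hbx, hby, Ne.symm hab]
    · simp [hcy, Ne.symm hac, Ne.symm hbc]
    · simp [hxy, Ne.symm hax, Ne.symm hbx]
    · simp [hax, hay, hac]
    · simp [hbx, hby, hbc]
    · simp [hay, hab, hac]
    · simp [hxy, Ne.symm hbx, Ne.symm hcx]
  -- edge memberships of e1 e2 e3 in {x,y,zi} form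
  have m1 : ({x, y, z1} : Finset V) ∈ H := he1eq ▸ he1H
  have m2 : ({x, y, z2} : Finset V) ∈ H := he2eq ▸ he2H
  have m3 : ({x, y, z3} : Finset V) ∈ H := he3eq ▸ he3H
  -- final case analysis
  rcases X12 with g12 | e12
  · rcases X13 with g13 | e13
    · rcases X23 with g23 | e23
      · rcases Y12 with h12' | f12
        · exact T1 z1 z2 hz12 hz1x hz1y hz2x hz2y g12.1 g12.2 h12'.1 h12'.2
        · rcases Y13 with h13' | f13
          · exact T1 z1 z3 hz13 hz1x hz1y hz3x hz3y g13.1 g13.2 h13'.1 h13'.2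
          · rcases Y23 with h23' | f23
            · exact T1 z2 z3 hz23 hz2x hz2y hz3x hz3y g23.1 g23.2 h23'.1 h23'.2
            · -- y-edges {y,z1,z2}, {y,z1,z3} share z1
              exact T2y z2 z1 z3 hz12.symm hz23 hz13 hz2x hz2y hz1x hz1y hz3x hz3y
                m2 m3 (pc y z1 z2 ▸ f12) f13
      · rcases Y12 with h12' | f12
        · exact T1 z1 z2 hz12 hz1x hz1y hz2x hz2y g12.1 g12.2 h12'.1 h12'.2
        · rcases Y13 with h13' | f13
          · exact T1 z1 z3 hz13 hz1x hz1y hz3x hz3y g13.1 g13.2 h13'.1 h13'.2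
          · exact T2y z2 z1 z3 hz12.symm hz23 hz13 hz2x hz2y hz1x hz1y hz3x hz3y
              m2 m3 (pc y z1 z2 ▸ f12) f13
    · rcases X23 with g23 | e23
      · rcases Y23 with h23' | f23
        · exact T1 z2 z3 hz23 hz2x hz2y hz3x hz3y g23.1 g23.2 h23'.1 h23'.2
        · rcases Y12 with h12' | f12
          · exact T1 z1 z2 hz12 hz1x hz1y hz2x hz2y g12.1 g12.2 h12'.1 h12'.2
          · -- y-edges {y,z1,z2}, {y,z2,z3} share z2
            exact T2y z1 z2 z3 hz12 hz13 hz23 hz1x hz1y hz2x hz2y hz3x hz3y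
              m1 m3 f12 f23
      · -- x-edges {x,z1,z3}, {x,z2,z3} share z3
        exact T2x z1 z3 z2 hz13 hz12 hz23.symm hz1x hz1y hz3x hz3y hz2x hz2y
          m1 m2 e13 (pc x z2 z3 ▸ e23)
  · rcases X13 with g13 | e13
    · rcases X23 with g23 | e23
      · rcases Y13 with h13' | f13
        · exact T1 z1 z3 hz13 hz1x hz1y hz3x hz3y g13.1 g13.2 h13'.1 h13'.2
        · rcases Y23 with h23' | f23
          · exact T1 z2 z3 hz23 hz2x hz2y hz3x hz3y g23.1 g23.2 h23'.1 h23'.2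
          · -- y-edges {y,z1,z3}, {y,z2,z3} share z3
            exact T2y z1 z3 z2 hz13 hz12 hz23.symm hz1x hz1y hz3x hz3y hz2x hz2y
              m1 m2 f13 (pc y z2 z3 ▸ f23)
      · -- x-edges {x,z1,z2}, {x,z2,z3} share z2
        exact T2x z1 z2 z3 hz12 hz13 hz23 hz1x hz1y hz2x hz2y hz3x hz3y
          m1 m3 e12 e23
    · -- x-edges {x,z1,z2}, {x,z1,z3} share z1
      exact T2x z2 z1 z3 hz12.symm hz23 hz13 hz2x hz2y hz1x hz1y hz3x hz3y
        m2 m3 (pc x z1 z2 ▸ e12) e13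
end

section
/- Let H be a 3-uniform hypergraph on n vertices containing no trace of C_4 = K_{2,2}, and let B ⊆ E(H) be the set of edges all of whose pairs have co-degree at least 2 in H (so B has maximum co-degree at most 2). Then for any two distinct vertices x, y, the set N_1(x) ∩ N_1(y) of common neighbors has size at most 7, where N_1(v) denotes the set of vertices sharing an edge of B with v. -/
open Finset

/-- The neighborhood `N₁(v)` of `v` in the hypergraph `B`. -/
def nbhd {V : Type*} [Fintype V] [DecidableEq V] (B : Finset (Finset V)) (v : V) : Finset V :=
  univ.filter fun u => u ≠ v ∧ ∃ e ∈ B, v ∈ e ∧ u ∈ e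

/-!
Every common neighbour `z` of `x` and `y` shares an edge of `B` with `x`, so `x z` has co-degree at
least 2 in `H`; of two edges through `x z` at most one contains `y`, which gives an edge `a z ∈ H`
through `x, z` avoiding `y`, and likewise an edge `b z` through `y, z` avoiding `x`. Say `z` conflicts
with `w` if `w ∈ a z ∪ b z`: each `z` conflicts with at most two other common neighbours, namely the
third vertices of `a z` and `b z`. Among at least six common neighbours there are therefore two,
`z₁` and `z₂`, that do not conflict in either direction, and then `a z₁, b z₁, a z₂, b z₂` trace a
`C₄` on `x, z₁, y, z₂`.
-/

theorem exists_pair_not_rel_of_card_filter_le {α : Type*} [DecidableEq α]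
    (r : α → α → Prop) [DecidableRel r] (Z : Finset α) (k : ℕ)
    (hr : ∀ z ∈ Z, ((Z.erase z).filter (r z)).card ≤ k) (hZ : 2 * k + 1 < Z.card) :
    ∃ z₁ ∈ Z, ∃ z₂ ∈ Z, z₁ ≠ z₂ ∧ ¬ r z₁ z₂ ∧ ¬ r z₂ z₁ := by
  by_contra! h
  have hcover : Z.offDiag ⊆
      Z.biUnion fun z => ((Z.erase z).filter (r z)).biUnion fun w => {(z, w), (w, z)} := by
    rintro ⟨z₁, z₂⟩ hz
    obtain ⟨hz₁, hz₂, hne⟩ := mem_offDiag.mp hz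
    simp only [mem_biUnion, mem_filter, mem_erase, mem_insert, mem_singleton]
    by_cases h₁₂ : r z₁ z₂
    · exact ⟨z₁, hz₁, z₂, ⟨⟨hne.symm, hz₂⟩, h₁₂⟩, Or.inl rfl⟩
    · exact ⟨z₂, hz₂, z₁, ⟨⟨hne, hz₁⟩, h z₁ hz₁ z₂ hz₂ hne h₁₂⟩, Or.inr rfl⟩
  have hcard : Z.card * Z.card - Z.card ≤ Z.card * (2 * k) := by
    rw [← offDiag_card]
    refine (card_le_card hcover).trans (card_biUnion_le_card_mul _ _ _ fun z hz => ?_)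
    calc _ ≤ ((Z.erase z).filter (r z)).card * 2 :=
          card_biUnion_le_card_mul _ _ _ fun _ _ => card_le_two
      _ ≤ 2 * k := by linarith [hr z hz]
  have : Z.card - 1 ≤ 2 * k :=
    Nat.le_of_mul_le_mul_left (by rwa [Nat.mul_sub_one]) (by omega)
  omega

section Hypergraph

variable {V : Type*} [DecidableEq V]

theorem card_inter_le_one_of_card_eq_three {s T : Finset V} (hs : s.card = 3) {p q : V}
    (hp : p ∈ s) (hq : q ∈ s) (hpq : p ≠ q) (hpT : p ∉ T) (hqT : q ∉ T) : (T ∩ s).card ≤ 1 := by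
  have hsub : T ∩ s ⊆ s \ {p, q} := fun v hv => by
    rw [mem_inter] at hv
    simp only [mem_sdiff, mem_insert, mem_singleton]
    grind
  calc (T ∩ s).card ≤ (s \ {p, q}).card := card_le_card hsub
    _ = 1 := by rw [card_sdiff_of_subset (by simp [insert_subset_iff, hp, hq]), hs, card_pair hpq]

theorem exists_mem_not_mem_of_two_le_codeg {H : Finset (Finset V)} (h3 : ∀ e ∈ H, e.card = 3)
    {p q r : V} (hcodeg : 2 ≤ codeg H p q) (hpq : p ≠ q) (hpr : p ≠ r) (hqr : q ≠ r) :
    ∃ a ∈ H, p ∈ a ∧ q ∈ a ∧ r ∉ a := by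
  obtain ⟨a, ha, b, hb, hab⟩ := one_lt_card.mp hcodeg
  simp only [mem_filter] at ha hb
  by_contra! h
  have htriple : ∀ c ∈ H, p ∈ c → q ∈ c → r ∈ c → c = {p, q, r} := fun c hc hp hq hr =>
    (eq_of_subset_of_card_le (by simp [insert_subset_iff, *]) (by
      rw [h3 c hc, card_insert_of_notMem (by simp [hpq, hpr]),
        card_insert_of_notMem (by simp [hqr]), card_singleton])).symm
  exact hab ((htriple a ha.1 ha.2.1 ha.2.2 (h a ha.1 ha.2.1 ha.2.2)).trans
    (htriple b hb.1 hb.2.1 hb.2.2 (h b hb.1 hb.2.1 hb.2.2)).symm)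

theorem containsTraceK2t_two {H : Finset (Finset V)} {x y z₁ z₂ : V} {a₁ a₂ b₁ b₂ : Finset V}
    (ha₁ : a₁ ∈ H ∧ x ∈ a₁ ∧ z₁ ∈ a₁ ∧ y ∉ a₁) (ha₂ : a₂ ∈ H ∧ x ∈ a₂ ∧ z₂ ∈ a₂ ∧ y ∉ a₂)
    (hb₁ : b₁ ∈ H ∧ y ∈ b₁ ∧ z₁ ∈ b₁ ∧ x ∉ b₁) (hb₂ : b₂ ∈ H ∧ y ∈ b₂ ∧ z₂ ∈ b₂ ∧ x ∉ b₂)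
    (h₁₂ : z₂ ∉ a₁ ∧ z₂ ∉ b₁) (h₂₁ : z₁ ∉ a₂ ∧ z₁ ∉ b₂) :
    ContainsTraceK2t H 2 := by
  have hz : z₁ ≠ z₂ := by grind
  refine ⟨x, y, {z₁, z₂}, fun u => if u = z₁ then a₁ else a₂, fun u => if u = z₁ then b₁ else b₂,
    by grind, by grind, by grind, card_pair hz, fun u hu => ?_⟩
  simp only [Finset.ext_iff, mem_inter, mem_insert, mem_singleton] at hu ⊢
  grind

variable [Fintype V]

theorem mem_nbhd {B : Finset (Finset V)} {v u : V} :
    u ∈ nbhd B v ↔ u ≠ v ∧ ∃ e ∈ B, v ∈ e ∧ u ∈ e := by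
  simp [nbhd]

theorem notMem_nbhd_self (B : Finset (Finset V)) (v : V) : v ∉ nbhd B v :=
  fun h => (mem_nbhd.mp h).1 rfl

theorem exists_mem_not_mem_of_mem_nbhd {H B : Finset (Finset V)} (h3 : ∀ e ∈ H, e.card = 3)
    (hB : ∀ e, e ∈ B ↔ e ∈ H ∧ ∀ a ∈ e, ∀ b ∈ e, a ≠ b → 2 ≤ codeg H a b) {v u w : V}
    (hu : u ∈ nbhd B v) (hvw : v ≠ w) (huw : u ≠ w) : ∃ a ∈ H, v ∈ a ∧ u ∈ a ∧ w ∉ a := by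
  obtain ⟨huv, e, he, hv, hu⟩ := mem_nbhd.mp hu
  exact exists_mem_not_mem_of_two_le_codeg h3 (((hB e).mp he).2 v hv u hu huv.symm)
    huv.symm hvw huw

end Hypergraph

/-- Let `H` be a 3-uniform hypergraph with no `C₄ = K_{2,2}` trace and let `B`
be the set of edges all of whose pairs have co-degree at least 2 in `H`.  Then
any two distinct vertices have at most 7 common neighbors in `B`. -/
theorem stmt8 {V : Type*} [Fintype V] [DecidableEq V]
    (H : Finset (Finset V)) (h3 : ∀ e ∈ H, e.card = 3)
    (hfree : ¬ ContainsTraceK2t H 2)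
    (B : Finset (Finset V))
    (hB : ∀ e, e ∈ B ↔ e ∈ H ∧ ∀ a ∈ e, ∀ b ∈ e, a ≠ b → 2 ≤ codeg H a b)
    (x y : V) (hxy : x ≠ y) :
    (nbhd B x ∩ nbhd B y).card ≤ 7 := by
  by_contra! hcard
  set Z := nbhd B x ∩ nbhd B y
  have hxZ : x ∉ Z := fun h => notMem_nbhd_self B x (mem_inter.mp h).1
  have hyZ : y ∉ Z := fun h => notMem_nbhd_self B y (mem_inter.mp h).2
  have hxz : ∀ z ∈ Z, ∃ a ∈ H, x ∈ a ∧ z ∈ a ∧ y ∉ a := fun z hz =>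
    exists_mem_not_mem_of_mem_nbhd h3 hB (mem_inter.mp hz).1 hxy (ne_of_mem_of_not_mem hz hyZ)
  have hyz : ∀ z ∈ Z, ∃ b ∈ H, y ∈ b ∧ z ∈ b ∧ x ∉ b := fun z hz =>
    exists_mem_not_mem_of_mem_nbhd h3 hB (mem_inter.mp hz).2 hxy.symm
      (ne_of_mem_of_not_mem hz hxZ)
  choose! a ha using hxz
  choose! b hb using hyz
  have hconflict : ∀ z ∈ Z, ((Z.erase z).filter fun w => w ∈ a z ∨ w ∈ b z).card ≤ 2 := by
    intro z hz
    rw [filter_or, filter_mem_eq_inter, filter_mem_eq_inter]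
    refine (card_union_le _ _).trans (add_le_add (b := 1) (d := 1) ?_ ?_)
    · exact card_inter_le_one_of_card_eq_three (h3 _ (ha z hz).1) (ha z hz).2.1 (ha z hz).2.2.1
        (ne_of_mem_of_not_mem hz hxZ).symm (fun h => hxZ (mem_of_mem_erase h)) (notMem_erase z Z)
    · exact card_inter_le_one_of_card_eq_three (h3 _ (hb z hz).1) (hb z hz).2.1 (hb z hz).2.2.1
        (ne_of_mem_of_not_mem hz hyZ).symm (fun h => hyZ (mem_of_mem_erase h)) (notMem_erase z Z)
  obtain ⟨z₁, hz₁, z₂, hz₂, -, h₁₂, h₂₁⟩ :=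
    exists_pair_not_rel_of_card_filter_le _ Z 2 hconflict (by omega)
  exact hfree (containsTraceK2t_two (ha z₁ hz₁) (ha z₂ hz₂) (hb z₁ hz₁) (hb z₂ hz₂)
    (not_or.mp h₁₂) (not_or.mp h₂₁))
end

section
/- Let H be a 3-uniform hypergraph on n vertices in which every pair of distinct vertices has co-degree at most 2, and suppose that for every vertex v, Σ_{u ∈ N_1(v)} d(u) ≤ n + 46·d(v), where d(u) is the number of edges containing u and N_1(v) is the set of vertices sharing an edge with v. Then the number of edges of H is at most (1/3)·n^{3/2} + O(n); more precisely, e(H) ≤ (1/3)·n^{3/2} + C·n for some absolute constant C. -/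
open Finset

/-- The degree of `v` in `H`: the number of edges containing `v`. -/
def hdeg {V : Type*} [DecidableEq V] (H : Finset (Finset V)) (v : V) : ℕ :=
  (H.filter fun e => v ∈ e).card

section aux
variable {V : Type} [Fintype V] [DecidableEq V] (H : Finset (Finset V))

lemma sum_hdeg (h3 : ∀ e ∈ H, e.card = 3) : ∑ v, hdeg H v = 3 * H.card := by
  have h : ∀ v : V, hdeg H v = ∑ e ∈ H, if v ∈ e then 1 else 0 := fun v => by
    rw [hdeg, Finset.card_filter]
  simp_rw [h]
  rw [Finset.sum_comm]
  have h2 : ∀ e ∈ H, (∑ v : V, if v ∈ e then 1 else 0) = 3 := by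
    intro e he
    rw [← Finset.card_filter, Finset.filter_univ_mem]
    exact h3 e he
  rw [Finset.sum_congr rfl h2, Finset.sum_const, smul_eq_mul, mul_comm]

lemma deg_le_nbrs (h3 : ∀ e ∈ H, e.card = 3)
    (hco : ∀ x y : V, x ≠ y → codeg H x y ≤ 2) (u : V) :
    hdeg H u ≤ (univ.filter (fun w => w ≠ u ∧ ∃ e ∈ H, u ∈ e ∧ w ∈ e)).card := by
  set N := univ.filter (fun w => w ≠ u ∧ ∃ e ∈ H, u ∈ e ∧ w ∈ e) with hN
  have key : 2 * hdeg H u ≤ 2 * N.card := by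
    have h1 : 2 * hdeg H u = ∑ e ∈ H.filter (fun e => u ∈ e), (e.erase u).card := by
      have hc : ∀ e ∈ H.filter (fun e => u ∈ e), (e.erase u).card = 2 := by
        intro e he
        simp only [Finset.mem_filter] at he
        rw [Finset.card_erase_of_mem he.2, h3 e he.1]
      rw [Finset.sum_congr rfl hc, Finset.sum_const, smul_eq_mul, hdeg, mul_comm]
    have h2 : ∀ e ∈ H.filter (fun e => u ∈ e),
        (e.erase u).card = ∑ w ∈ N, if w ∈ e.erase u then 1 else 0 := by
      intro e he
      simp only [Finset.mem_filter] at he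
      rw [← Finset.card_filter]
      congr 1
      rw [Finset.filter_mem_eq_inter]
      refine (Finset.inter_eq_right.mpr ?_).symm
      intro w hw
      simp only [Finset.mem_erase] at hw
      simp only [hN, Finset.mem_filter, Finset.mem_univ, true_and]
      exact ⟨hw.1, e, he.1, he.2, hw.2⟩
    rw [h1, Finset.sum_congr rfl h2, Finset.sum_comm]
    have h4 : ∀ w ∈ N,
        (∑ e ∈ H.filter (fun e => u ∈ e), if w ∈ e.erase u then 1 else 0) ≤ 2 := by
      intro w hw
      simp only [hN, Finset.mem_filter, Finset.mem_univ, true_and] at hw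
      rw [← Finset.card_filter]
      have : ((H.filter (fun e => u ∈ e)).filter (fun e => w ∈ e.erase u)).card
          ≤ codeg H u w := by
        apply Finset.card_le_card
        intro e he
        simp only [Finset.mem_filter, Finset.mem_erase, codeg] at he ⊢
        exact ⟨he.1.1, he.1.2, he.2.2⟩
      exact this.trans (hco u w (Ne.symm hw.1))
    calc (∑ w ∈ N, ∑ e ∈ H.filter (fun e => u ∈ e), if w ∈ e.erase u then 1 else 0)
        ≤ ∑ w ∈ N, 2 := Finset.sum_le_sum h4
      _ = 2 * N.card := by rw [Finset.sum_const, smul_eq_mul, mul_comm]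
  omega

lemma main_ineq (h3 : ∀ e ∈ H, e.card = 3)
    (hco : ∀ x y : V, x ≠ y → codeg H x y ≤ 2)
    (hsum : ∀ v : V,
      ∑ u ∈ univ.filter (fun u => u ≠ v ∧ ∃ e ∈ H, v ∈ e ∧ u ∈ e), hdeg H u ≤
        Fintype.card V + 46 * hdeg H v) :
    9 * H.card ^ 2 ≤ Fintype.card V ^ 3 + 138 * Fintype.card V * H.card := by
  set n := Fintype.card V
  have hCS : (3 * H.card) ^ 2 ≤ n * ∑ v, hdeg H v ^ 2 := by
    rw [← sum_hdeg H h3]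
    have := sq_sum_le_card_mul_sum_sq (s := (univ : Finset V))
      (f := fun v => (hdeg H v : ℤ))
    have hn : ((univ : Finset V).card : ℤ) = n := by simp [n]
    push_cast at this
    exact_mod_cast this
  have hsq : ∀ u : V, hdeg H u ^ 2 ≤
      ∑ w ∈ univ.filter (fun w => w ≠ u ∧ ∃ e ∈ H, u ∈ e ∧ w ∈ e), hdeg H u := by
    intro u
    rw [Finset.sum_const, smul_eq_mul, sq]
    exact Nat.mul_le_mul_right _ (deg_le_nbrs H h3 hco u)
  have hswap : (∑ u : V, ∑ w ∈ univ.filter (fun w => w ≠ u ∧ ∃ e ∈ H, u ∈ e ∧ w ∈ e), hdeg H u)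
      = ∑ w : V, ∑ u ∈ univ.filter (fun u => u ≠ w ∧ ∃ e ∈ H, w ∈ e ∧ u ∈ e), hdeg H u := by
    simp_rw [Finset.sum_filter]
    rw [Finset.sum_comm]
    refine Finset.sum_congr rfl fun w _ => Finset.sum_congr rfl fun u _ => ?_
    have hiff : (w ≠ u ∧ ∃ e ∈ H, u ∈ e ∧ w ∈ e) ↔ (u ≠ w ∧ ∃ e ∈ H, w ∈ e ∧ u ∈ e) := by
      constructor <;> rintro ⟨h1, e, he, h2, h4⟩ <;> exact ⟨h1.symm, e, he, h4, h2⟩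
    simp only [hiff]
  have h5 : ∑ u, hdeg H u ^ 2 ≤ n * n + 138 * H.card := by
    calc ∑ u, hdeg H u ^ 2
        ≤ ∑ u : V, ∑ w ∈ univ.filter (fun w => w ≠ u ∧ ∃ e ∈ H, u ∈ e ∧ w ∈ e), hdeg H u :=
          Finset.sum_le_sum fun u _ => hsq u
      _ = ∑ w : V, ∑ u ∈ univ.filter (fun u => u ≠ w ∧ ∃ e ∈ H, w ∈ e ∧ u ∈ e), hdeg H u := hswap
      _ ≤ ∑ _w : V, (n + 46 * hdeg H _w) := Finset.sum_le_sum fun w _ => hsum w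
      _ = n * n + 46 * ∑ w, hdeg H w := by
          rw [Finset.sum_add_distrib, Finset.sum_const, ← Finset.mul_sum, smul_eq_mul]
          simp [n]
      _ = n * n + 138 * H.card := by rw [sum_hdeg H h3]; ring
  have := hCS.trans (Nat.mul_le_mul_left n h5)
  nlinarith [this]
end aux

/-- There is an absolute constant `C` such that: every 3-uniform hypergraph `H`
on `n` vertices with all co-degrees at most 2 and satisfying
`Σ_{u ∈ N₁(v)} d(u) ≤ n + 46·d(v)` for every vertex `v` has
`e(H) ≤ (1/3)·n^{3/2} + C·n`. -/
theorem stmt17 :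
    ∃ C : ℝ, ∀ (V : Type) [Fintype V] [DecidableEq V] (H : Finset (Finset V)),
      (∀ e ∈ H, e.card = 3) →
      (∀ x y : V, x ≠ y → codeg H x y ≤ 2) →
      (∀ v : V,
        ∑ u ∈ univ.filter (fun u => u ≠ v ∧ ∃ e ∈ H, v ∈ e ∧ u ∈ e), hdeg H u ≤
          Fintype.card V + 46 * hdeg H v) →
      (H.card : ℝ) ≤
        (1 / 3) * (Fintype.card V : ℝ) ^ ((3 : ℝ) / 2) + C * (Fintype.card V : ℝ) := by
  refine ⟨16, ?_⟩
  intro V _ _ H h3 hco hsum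
  have key := main_ineq H h3 hco hsum
  set n := Fintype.card V with hn
  have hkey : (9:ℝ) * (H.card:ℝ)^2 ≤ (n:ℝ)^3 + 138 * (n:ℝ) * (H.card:ℝ) := by
    exact_mod_cast key
  set s : ℝ := (n:ℝ) ^ ((3:ℝ)/2) with hs
  have hn0 : (0:ℝ) ≤ (n:ℝ) := Nat.cast_nonneg n
  have hs0 : 0 ≤ s := Real.rpow_nonneg hn0 _
  have hs2 : s ^ 2 = (n:ℝ)^3 := by
    rw [hs, ← Real.rpow_natCast ((n:ℝ) ^ ((3:ℝ)/2)) 2, ← Real.rpow_mul hn0,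
      ← Real.rpow_natCast (n:ℝ) 3]
    norm_num
  have he0 : (0:ℝ) ≤ (H.card : ℝ) := Nat.cast_nonneg _
  by_contra h
  push_neg at h
  have h' : s/3 + 16*(n:ℝ) < (H.card:ℝ) := by linarith
  nlinarith [mul_nonneg (le_of_lt (sub_pos.mpr h'))
      (by positivity : (0:ℝ) ≤ 9*(H.card:ℝ) + 3*s + 6*(n:ℝ)),
    mul_nonneg hn0 hs0, hs2, hkey, he0, hs0, hn0]
end

section
/- Let H be a 3-uniform hypergraph on n vertices, let A ⊆ E(H) be the set of edges containing at least one pair of vertices with co-degree exactly 1 in H, and let G be a simple graph on V(H) obtained by choosing from each edge e ∈ A one pair of vertices of co-degree 1. If H contains no trace of K_{2,t}, then G contains no copy of K_{2,t} as a subgraph; in particular |A| = e(G) ≤ ex(n, K_{2,t}). -/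
open Finset

/-- A simple graph `G` contains `K_{2,t}` as a subgraph. -/
def HasK2tSubgraph {V : Type*} (G : SimpleGraph V) (t : ℕ) : Prop :=
  ∃ x y : V, x ≠ y ∧ ∃ D : Finset V, D.card = t ∧ x ∉ D ∧ y ∉ D ∧
    ∀ u ∈ D, G.Adj x u ∧ G.Adj y u

/-- The Turán number `ex(n, K_{2,t})`: the maximum number of edges of a
`K_{2,t}`-free simple graph on `n` vertices. -/
noncomputable def exK2t (n t : ℕ) : ℕ :=
  sSup {m | ∃ G : SimpleGraph (Fin n), ¬ HasK2tSubgraph G t ∧ G.edgeSet.ncard = m}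

/-- If `A` is the set of edges of `H` containing a pair of co-degree 1, `G` is a
graph obtained by choosing from each edge of `A` one pair of co-degree 1, and
`H` has no `K_{2,t}` trace, then `G` has no `K_{2,t}` subgraph; in particular
`|A| = e(G) ≤ ex(n, K_{2,t})`. -/
theorem stmt18 {V : Type*} [Fintype V] [DecidableEq V] (t : ℕ)
    (H : Finset (Finset V)) (h3 : ∀ e ∈ H, e.card = 3)
    (A : Finset (Finset V))
    (hA : ∀ e, e ∈ A ↔ e ∈ H ∧ ∃ a ∈ e, ∃ b ∈ e, a ≠ b ∧ codeg H a b = 1)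
    (f : Finset V → V × V)
    (hf : ∀ e ∈ A, (f e).1 ∈ e ∧ (f e).2 ∈ e ∧ (f e).1 ≠ (f e).2 ∧
      codeg H (f e).1 (f e).2 = 1)
    (G : SimpleGraph V)
    (hG : ∀ u v : V, G.Adj u v ↔ ∃ e ∈ A, f e = (u, v) ∨ f e = (v, u))
    (hfree : ¬ ContainsTraceK2t H t) :
    ¬ HasK2tSubgraph G t ∧ A.card = G.edgeSet.ncard ∧
      A.card ≤ exK2t (Fintype.card V) t := by
  classical
  have hcomm : ∀ a b : V, codeg H a b = codeg H b a := by
    intro a b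
    unfold codeg
    congr 1
    apply Finset.filter_congr
    intro e _
    simp [and_comm]
  have huniq : ∀ a b : V, codeg H a b = 1 → ∀ e ∈ H, a ∈ e → b ∈ e →
      ∀ e' ∈ H, a ∈ e' → b ∈ e' → e = e' := by
    intro a b hc e he ha hb e' he' ha' hb'
    have h1 : e ∈ H.filter (fun e => a ∈ e ∧ b ∈ e) := by
      simp [Finset.mem_filter, he, ha, hb]
    have h2 : e' ∈ H.filter (fun e => a ∈ e ∧ b ∈ e) := by
      simp [Finset.mem_filter, he', ha', hb']
    exact Finset.card_le_one.1 hc.le e h1 e' h2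
  have hmemA : ∀ e ∈ A, e ∈ H := fun e he => ((hA e).1 he).1
  have hpair : ∀ e ∈ A, ∀ u v : V, (f e = (u, v) ∨ f e = (v, u)) →
      u ∈ e ∧ v ∈ e ∧ u ≠ v ∧ codeg H u v = 1 := by
    intro e he u v h
    obtain ⟨h1, h2, h3, h4⟩ := hf e he
    rcases h with h | h <;> rw [h] at h1 h2 h3 h4
    · exact ⟨h1, h2, h3, h4⟩
    · exact ⟨h2, h1, h3.symm, (hcomm u v).trans h4⟩
  have key : ∀ e ∈ A, ∀ e' ∈ A, ∀ u v u' v' : V,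
      (f e = (u, v) ∨ f e = (v, u)) → (f e' = (u', v') ∨ f e' = (v', u')) →
      u' ∈ e → v' ∈ e → ((u, v) = (u', v') ∨ (u, v) = (v', u')) := by
    intro e he e' he' u v u' v' h h' hu' hv'
    obtain ⟨hu'e', hv'e', _, hc⟩ := hpair e' he' u' v' h'
    have hee : e = e' :=
      huniq u' v' hc e (hmemA e he) hu' hv' e' (hmemA e' he') hu'e' hv'e'
    rw [← hee] at h'
    rcases h with h | h <;> rcases h' with h' | h'
    · exact Or.inl (h.symm.trans h')
    · exact Or.inr (h.symm.trans h')
    · have hh := h.symm.trans h'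
      rw [Prod.mk.injEq] at hh
      exact Or.inr (by rw [hh.1, hh.2])
    · have hh := h.symm.trans h'
      rw [Prod.mk.injEq] at hh
      exact Or.inl (by rw [hh.1, hh.2])
  -- Part 1: no K_{2,t} subgraph
  have hnoK : ¬ HasK2tSubgraph G t := by
    rintro ⟨x, y, hxy, D, hDcard, hxD, hyD, hadj⟩
    have hx : ∀ u ∈ D, ∃ e, e ∈ A ∧ (f e = (x, u) ∨ f e = (u, x)) := by
      intro u hu
      obtain ⟨e, he, h⟩ := (hG x u).1 (hadj u hu).1
      exact ⟨e, he, h⟩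
    have hy : ∀ u ∈ D, ∃ e, e ∈ A ∧ (f e = (y, u) ∨ f e = (u, y)) := by
      intro u hu
      obtain ⟨e, he, h⟩ := (hG y u).1 (hadj u hu).2
      exact ⟨e, he, h⟩
    set F : V → Finset V := fun u => if h : u ∈ D then (hx u h).choose else ∅ with hF
    set Gg : V → Finset V := fun u => if h : u ∈ D then (hy u h).choose else ∅ with hGg
    have hFspec : ∀ u ∈ D, F u ∈ A ∧ (f (F u) = (x, u) ∨ f (F u) = (u, x)) := by
      intro u hu
      simp only [hF, dif_pos hu]
      exact (hx u hu).choose_spec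
    have hGspec : ∀ u ∈ D, Gg u ∈ A ∧ (f (Gg u) = (y, u) ∨ f (Gg u) = (u, y)) := by
      intro u hu
      simp only [hGg, dif_pos hu]
      exact (hy u hu).choose_spec
    apply hfree
    refine ⟨x, y, D, F, Gg, hxy, hxD, hyD, hDcard, ?_⟩
    intro u hu
    obtain ⟨hFA, hFp⟩ := hFspec u hu
    obtain ⟨hGA, hGp⟩ := hGspec u hu
    obtain ⟨hxF, huF, hxu, _⟩ := hpair _ hFA x u hFp
    obtain ⟨hyG, huG, hyu, _⟩ := hpair _ hGA y u hGp
    refine ⟨hmemA _ hFA, hmemA _ hGA, ?_, ?_⟩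
    · ext z
      simp only [Finset.mem_inter, Finset.mem_insert, Finset.mem_singleton]
      constructor
      · rintro ⟨hzF, hz | hz | hzD⟩
        · exact Or.inl hz
        · exfalso
          subst hz
          rcases key (F u) hFA (Gg u) hGA x u z u hFp hGp hzF huF with h | h <;>
            rw [Prod.mk.injEq] at h
          · exact hxy h.1
          · exact hyD (h.2 ▸ hu)
        · by_cases hzu : z = u
          · exact Or.inr hzu
          · exfalso
            obtain ⟨hFzA, hFzp⟩ := hFspec z hzD
            rcases key (F u) hFA (F z) hFzA x u x z hFp hFzp hxF hzF with h | h <;>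
              rw [Prod.mk.injEq] at h
            · exact hzu h.2.symm
            · exact hxD (h.1 ▸ hzD)
      · rintro (rfl | rfl)
        · exact ⟨hxF, Or.inl rfl⟩
        · exact ⟨huF, Or.inr (Or.inr hu)⟩
    · ext z
      simp only [Finset.mem_inter, Finset.mem_insert, Finset.mem_singleton]
      constructor
      · rintro ⟨hzG, hz | hz | hzD⟩
        · exfalso
          subst hz
          rcases key (Gg u) hGA (F u) hFA y u z u hGp hFp hzG huG with h | h <;>
            rw [Prod.mk.injEq] at h
          · exact hxy h.1.symm
          · exact hxD (h.2 ▸ hu)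
        · exact Or.inl hz
        · by_cases hzu : z = u
          · exact Or.inr hzu
          · exfalso
            obtain ⟨hGzA, hGzp⟩ := hGspec z hzD
            rcases key (Gg u) hGA (Gg z) hGzA y u y z hGp hGzp hyG hzG with h | h <;>
              rw [Prod.mk.injEq] at h
            · exact hzu h.2.symm
            · exact hyD (h.1 ▸ hzD)
      · rintro (rfl | rfl)
        · exact ⟨hyG, Or.inr (Or.inl rfl)⟩
        · exact ⟨huG, Or.inr (Or.inr hu)⟩
  -- Part 2: A.card = number of edges of G
  have himg : G.edgeSet = ↑(A.image fun e => s((f e).1, (f e).2)) := by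
    ext z
    induction z using Sym2.ind with
    | _ u v =>
      simp only [SimpleGraph.mem_edgeSet, hG, Finset.coe_image, Set.mem_image,
        Finset.mem_coe]
      constructor
      · rintro ⟨e, he, h | h⟩
        · exact ⟨e, he, by rw [h]⟩
        · exact ⟨e, he, by rw [h]; exact Sym2.eq_swap⟩
      · rintro ⟨e, he, hz⟩
        refine ⟨e, he, ?_⟩
        rw [Sym2.eq_iff] at hz
        rcases hz with ⟨h1, h2⟩ | ⟨h1, h2⟩
        · left; rw [Prod.ext_iff]; exact ⟨h1, h2⟩
        · right; rw [Prod.ext_iff]; exact ⟨h1, h2⟩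
  have hinj : Set.InjOn (fun e => s((f e).1, (f e).2)) ↑A := by
    intro e he e' he' h
    simp only [Finset.mem_coe] at he he'
    simp only at h
    rw [Sym2.eq_iff] at h
    obtain ⟨h1e, h2e, _, hc⟩ := hf e he
    obtain ⟨h1e', h2e', _, _⟩ := hf e' he'
    have h1 : (f e).1 ∈ e' ∧ (f e).2 ∈ e' := by
      rcases h with ⟨ha, hb⟩ | ⟨ha, hb⟩
      · rw [ha, hb]; exact ⟨h1e', h2e'⟩
      · rw [ha, hb]; exact ⟨h2e', h1e'⟩
    exact huniq _ _ hc e (hmemA e he) h1e h2e e' (hmemA e' he') h1.1 h1.2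
  have hcard : A.card = G.edgeSet.ncard := by
    rw [himg, Set.ncard_coe_finset]
    exact (Finset.card_image_of_injOn hinj).symm
  refine ⟨hnoK, hcard, ?_⟩
  -- Part 3: transfer to Fin n and bound by the Turán number
  set σ := Fintype.equivFin V with hσ
  set G' : SimpleGraph (Fin (Fintype.card V)) := G.map σ.toEmbedding with hG'
  have hadj' : ∀ a b, G'.Adj a b ↔ G.Adj (σ.symm a) (σ.symm b) := by
    intro a b
    rw [hG', SimpleGraph.map_adj]
    constructor
    · rintro ⟨a', b', h, rfl, rfl⟩
      simpa using h
    · intro h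
      exact ⟨σ.symm a, σ.symm b, h, by simp, by simp⟩
  have hfree' : ¬ HasK2tSubgraph G' t := by
    rintro ⟨x, y, hxy, D, hDc, hxD, hyD, hadjD⟩
    apply hnoK
    refine ⟨σ.symm x, σ.symm y, fun h => hxy (σ.symm.injective h), D.image σ.symm,
      ?_, ?_, ?_, ?_⟩
    · rw [Finset.card_image_of_injective D σ.symm.injective, hDc]
    · intro h
      obtain ⟨a, ha, hax⟩ := Finset.mem_image.1 h
      exact hxD ((σ.symm.injective hax) ▸ ha)
    · intro h
      obtain ⟨a, ha, hay⟩ := Finset.mem_image.1 h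
      exact hyD ((σ.symm.injective hay) ▸ ha)
    · intro u hu
      obtain ⟨a, ha, rfl⟩ := Finset.mem_image.1 hu
      exact ⟨(hadj' x a).1 (hadjD a ha).1, (hadj' y a).1 (hadjD a ha).2⟩
  have hncard : G'.edgeSet.ncard = G.edgeSet.ncard := by
    rw [← Nat.card_coe_set_eq, ← Nat.card_coe_set_eq]
    exact Nat.card_congr ((SimpleGraph.Iso.map σ G).mapEdgeSet).symm
  have hbdd : BddAbove {m | ∃ G'' : SimpleGraph (Fin (Fintype.card V)),
      ¬ HasK2tSubgraph G'' t ∧ G''.edgeSet.ncard = m} := by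
    refine ⟨Fintype.card (Sym2 (Fin (Fintype.card V))), ?_⟩
    rintro m ⟨G'', _, rfl⟩
    calc G''.edgeSet.ncard ≤ (Set.univ : Set (Sym2 (Fin (Fintype.card V)))).ncard :=
          Set.ncard_le_ncard (Set.subset_univ _) Set.finite_univ
      _ = _ := by rw [Set.ncard_univ, Nat.card_eq_fintype_card]
  have hmem : A.card ∈ {m | ∃ G'' : SimpleGraph (Fin (Fintype.card V)),
      ¬ HasK2tSubgraph G'' t ∧ G''.edgeSet.ncard = m} :=
    ⟨G', hfree', by rw [hncard, hcard]⟩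
  unfold exK2t
  exact le_csSup hbdd hmem
end

section
/- Let t ≥ 2, δ ≥ 14, and let H be a 3-uniform hypergraph on n vertices with no trace of K_{2,t}. Let C_δ be the set of edges e of H such that every pair of vertices contained in e has co-degree strictly greater than δ in H. Set ε = (1 + log(δ+1))/(δ+1). Then for every pair of distinct vertices {x,y}, the number of edges of C_δ containing both x and y is at most (1 + 4ε)·t − 1. -/
/-!
Let `U` be the set of vertices `u` with `{x, y, u} ∈ C` and `m = #U`. For `u ∈ U` both pairs
`xu` and `yu` have co-degree greater than `δ`, so their links `W₁ u ∌ y` and `W₂ u ∌ x` have at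
least `d = ⌊δ⌋` vertices. If `D ⊆ U` has `t` elements and no `u ∈ D` has `W₁ u ⊆ D` or
`W₂ u ⊆ D`, then a vertex of `W₁ u` and one of `W₂ u` outside `D`, for each `u ∈ D`, give a trace
of `K_{2,t}` on `{x, y} ∪ D`. When `t ≤ d` every `t`-subset of `U` will do. Otherwise pick a
random `s`-subset of `U`, `s = t + ⌈εt⌉`: a given `u` is bad with probability at most
`2 (s / m) ^ (d + 1)`, and if `m > (1 + 4ε)t - 1` then `s / m ≤ 1 - 25ε/21`, so that on average at
most `⌈εt⌉` vertices are bad; deleting them from a good choice leaves `t` vertices.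
-/

open Finset

section Hypergraph

variable {V : Type*} [DecidableEq V] {H : Finset (Finset V)} {a b : V}

-- `H.sup id`, the set of vertices covered by `H`, only serves to make the set finite.
def link (H : Finset (Finset V)) (a b : V) : Finset V :=
  {w ∈ H.sup id | w ≠ a ∧ w ≠ b ∧ {a, b, w} ∈ H}

lemma mem_link {w : V} : w ∈ link H a b ↔ w ≠ a ∧ w ≠ b ∧ {a, b, w} ∈ H := by
  simp only [link, mem_filter, mem_sup, id, and_iff_right_iff_imp]
  exact fun h => ⟨_, h.2.2, by simp⟩

lemma exists_eq_triple {e : Finset V} (he : #e = 3) (ha : a ∈ e) (hb : b ∈ e) (hab : a ≠ b) :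
    ∃ w, w ≠ a ∧ w ≠ b ∧ e = {a, b, w} := by
  have hb' : b ∈ e.erase a := mem_erase.2 ⟨hab.symm, hb⟩
  obtain ⟨w, hw⟩ := card_eq_one.1 <| by
    rw [card_erase_of_mem hb', card_erase_of_mem ha, he]
  have hw' : w ∈ (e.erase a).erase b := hw ▸ mem_singleton_self w
  refine ⟨w, (mem_erase.1 (mem_erase.1 hw').2).1, (mem_erase.1 hw').1, ?_⟩
  rw [← hw, insert_erase hb', insert_erase ha]

lemma card_link (h3 : ∀ e ∈ H, #e = 3) (hab : a ≠ b) : #(link H a b) = codeg H a b := by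
  have hinj : Set.InjOn (fun w => ({a, b, w} : Finset V)) (link H a b) := by
    intro w₁ hw₁ w₂ hw₂ h
    have h₁ := mem_link.1 hw₁
    have : w₁ ∈ ({a, b, w₂} : Finset V) := by
      rw [← show ({a, b, w₁} : Finset V) = {a, b, w₂} from h]
      simp
    simpa [h₁.1, h₁.2.1] using this
  rw [codeg, ← card_image_of_injOn hinj]
  congr 1
  ext e
  simp only [mem_image, mem_link, mem_filter]
  constructor
  · rintro ⟨w, ⟨-, -, hw⟩, rfl⟩
    simp [hw]
  · rintro ⟨he, ha, hb⟩
    obtain ⟨w, hwa, hwb, rfl⟩ := exists_eq_triple (h3 e he) ha hb hab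
    exact ⟨w, ⟨hwa, hwb, he⟩, rfl⟩

lemma triple_inter_eq {S : Finset V} {c : V} (ha : a ∈ S) (hb : b ∈ S) (hc : c ∉ S) :
    ({a, b, c} : Finset V) ∩ S = {a, b} := by
  rw [insert_inter_of_mem ha, insert_inter_of_mem hb, singleton_inter_of_notMem hc]
  rfl

lemma containsTraceK2t_of_forall_exists {t : ℕ} {x y : V} {D : Finset V} (hxy : x ≠ y)
    (hx : x ∉ D) (hy : y ∉ D) (hD : #D = t)
    (h : ∀ u ∈ D, (∃ w ∉ insert x (insert y D), {x, u, w} ∈ H) ∧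
      ∃ w ∉ insert x (insert y D), {y, u, w} ∈ H) :
    ContainsTraceK2t H t := by
  choose! f hfS hfH using fun u hu => (h u hu).1
  choose! g hgS hgH using fun u hu => (h u hu).2
  refine ⟨x, y, D, fun u => {x, u, f u}, fun u => {y, u, g u}, hxy, hx, hy, hD,
    fun u hu => ⟨hfH u hu, hgH u hu, ?_, ?_⟩⟩
  · exact triple_inter_eq (by simp) (by simp [hu]) (hfS u hu)
  · exact triple_inter_eq (by simp) (by simp [hu]) (hgS u hu)

lemma notMem_link_erase_and_le_card (h3 : ∀ e ∈ H, #e = 3) (hab : a ≠ b) (c : V) {d : ℕ}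
    (hd : d < codeg H a b) : b ∉ (link H a b).erase c ∧ d ≤ #((link H a b).erase c) := by
  refine ⟨fun hb => (mem_link.1 (mem_of_mem_erase hb)).2.1 rfl, ?_⟩
  have := pred_card_le_card_erase (s := link H a b) (a := c)
  rw [card_link h3 hab] at this
  omega

lemma containsTraceK2t_of_forall_not_subset {t : ℕ} {x y : V} {D : Finset V} (hxy : x ≠ y)
    (hx : x ∉ D) (hy : y ∉ D) (hD : #D = t)
    (h : ∀ u ∈ D, ¬(link H x u).erase y ⊆ D ∧ ¬(link H y u).erase x ⊆ D) :
    ContainsTraceK2t H t := by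
  refine containsTraceK2t_of_forall_exists hxy hx hy hD fun u hu => ⟨?_, ?_⟩
  · obtain ⟨w, hw, hwD⟩ := not_subset.1 (h u hu).1
    obtain ⟨hwy, hw⟩ := mem_erase.1 hw
    obtain ⟨hwx, -, hwH⟩ := mem_link.1 hw
    exact ⟨w, by simp [hwx, hwy, hwD], hwH⟩
  · obtain ⟨w, hw, hwD⟩ := not_subset.1 (h u hu).2
    obtain ⟨hwx, hw⟩ := mem_erase.1 hw
    obtain ⟨hwy, -, hwH⟩ := mem_link.1 hw
    exact ⟨w, by simp [hwx, hwy, hwD], hwH⟩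

end Hypergraph

namespace Nat

lemma descFactorial_mul_pow_le {s m : ℕ} (h : s ≤ m) (a : ℕ) :
    s.descFactorial a * m ^ a ≤ m.descFactorial a * s ^ a := by
  induction a with
  | zero => simp
  | succ a ih =>
    have hstep : (s - a) * m ≤ (m - a) * s := by
      rw [Nat.sub_mul, Nat.sub_mul, mul_comm s m]
      exact Nat.sub_le_sub_left (Nat.mul_le_mul_left a h) (m * s)
    calc s.descFactorial (a + 1) * m ^ (a + 1)
        = ((s - a) * m) * (s.descFactorial a * m ^ a) := by
          rw [descFactorial_succ, pow_succ]; ring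
      _ ≤ ((m - a) * s) * (m.descFactorial a * s ^ a) := Nat.mul_le_mul hstep ih
      _ = m.descFactorial (a + 1) * s ^ (a + 1) := by
          rw [descFactorial_succ, pow_succ]; ring

lemma choose_mul_pow_le {s m : ℕ} (h : s ≤ m) (a : ℕ) :
    s.choose a * m ^ a ≤ m.choose a * s ^ a := by
  refine Nat.le_of_mul_le_mul_left ?_ a.factorial_pos
  simpa only [descFactorial_eq_factorial_mul_choose, mul_assoc] using descFactorial_mul_pow_le h a

/-- `(m - a).choose (s - a) / m.choose s`, the chance that a random `s`-subset of an `m`-set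
contains a given `a`-set, is at most `(s / m) ^ a`. -/
lemma mul_choose_sub_le_of_mul_pow_le {a s m c k : ℕ} (has : a ≤ s) (hsm : s ≤ m) (hm : 0 < m)
    (hk : c * s ^ a ≤ k * m ^ a) : c * (m - a).choose (s - a) ≤ k * m.choose s := by
  refine Nat.le_of_mul_le_mul_right ?_ (pow_pos hm a)
  refine Nat.le_of_mul_le_mul_left ?_ (choose_pos (has.trans hsm))
  calc m.choose a * (c * (m - a).choose (s - a) * m ^ a)
      = c * (m.choose s * s.choose a) * m ^ a := by rw [choose_mul has]; ring
    _ = c * m.choose s * (s.choose a * m ^ a) := by ring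
    _ ≤ c * m.choose s * (m.choose a * s ^ a) := Nat.mul_le_mul_left _ (choose_mul_pow_le hsm a)
    _ = m.choose a * (m.choose s * (c * s ^ a)) := by ring
    _ ≤ m.choose a * (m.choose s * (k * m ^ a)) := by gcongr
    _ = m.choose a * (k * m.choose s * m ^ a) := by ring

end Nat

section Selection

variable {α : Type*} [DecidableEq α] {U : Finset α} {W W₁ W₂ : α → Finset α} {d s t : ℕ}

lemma card_filter_powersetCard_superset_le (U A : Finset α) {s : ℕ} (hAs : #A ≤ s) :
    #{D ∈ U.powersetCard s | A ⊆ D} ≤ (#U - #A).choose (s - #A) := by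
  by_cases hAU : A ⊆ U
  · exact (card_filter_powersetCard_subset A U s hAU hAs).le
  · rw [filter_false_of_mem fun D hD hAD => hAU (hAD.trans (mem_powersetCard.1 hD).1)]
    simp

lemma sum_card_filter_subset_le (hW : ∀ u ∈ U, u ∉ W u ∧ d ≤ #(W u)) (hds : d + 1 ≤ s) :
    ∑ D ∈ U.powersetCard s, #{u ∈ D | W u ⊆ D} ≤ #U * (#U - (d + 1)).choose (s - (d + 1)) := by
  calc ∑ D ∈ U.powersetCard s, #{u ∈ D | W u ⊆ D}
      = ∑ D ∈ U.powersetCard s, #{u ∈ U | u ∈ D ∧ W u ⊆ D} := by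
        refine sum_congr rfl fun D hD => congrArg card ?_
        ext u
        simp only [mem_filter]
        have := @(mem_powersetCard.1 hD).1 u
        tauto
    _ = ∑ u ∈ U, #{D ∈ U.powersetCard s | u ∈ D ∧ W u ⊆ D} :=
        sum_card_bipartiteAbove_eq_sum_card_bipartiteBelow fun D u => u ∈ D ∧ W u ⊆ D
    _ ≤ ∑ _u ∈ U, (#U - (d + 1)).choose (s - (d + 1)) := by
        refine sum_le_sum fun u hu => ?_
        obtain ⟨A, hA, hAcard⟩ := exists_subset_card_eq (s := insert u (W u)) (n := d + 1) <| by
          rw [card_insert_of_notMem (hW u hu).1]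
          exact Nat.succ_le_succ (hW u hu).2
        calc #{D ∈ U.powersetCard s | u ∈ D ∧ W u ⊆ D}
            ≤ #{D ∈ U.powersetCard s | A ⊆ D} :=
              card_le_card <| monotone_filter_right _ fun D _ hD =>
                hA.trans (insert_subset hD.1 hD.2)
          _ ≤ (#U - (d + 1)).choose (s - (d + 1)) :=
              hAcard ▸ card_filter_powersetCard_superset_le U A (hAcard ▸ hds)
    _ = #U * (#U - (d + 1)).choose (s - (d + 1)) := by rw [sum_const, smul_eq_mul]

lemma exists_subset_card_eq_forall_not_subset_of_le (hW₁ : ∀ u ∈ U, u ∉ W₁ u ∧ d ≤ #(W₁ u))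
    (hW₂ : ∀ u ∈ U, u ∉ W₂ u ∧ d ≤ #(W₂ u)) (htd : t ≤ d) (htU : t ≤ #U) :
    ∃ D ⊆ U, #D = t ∧ ∀ u ∈ D, ¬W₁ u ⊆ D ∧ ¬W₂ u ⊆ D := by
  obtain ⟨D, hDU, hD⟩ := exists_subset_card_eq htU
  have key : ∀ {W : α → Finset α}, (∀ u ∈ U, u ∉ W u ∧ d ≤ #(W u)) → ∀ u ∈ D, ¬W u ⊆ D :=
    fun hW u hu hWD => by
      have hle := card_le_card (subset_erase.2 ⟨hWD, (hW u (hDU hu)).1⟩)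
      rw [card_erase_of_mem hu, hD] at hle
      have := (hW u (hDU hu)).2
      have := card_pos.2 ⟨u, hu⟩
      omega
  exact ⟨D, hDU, hD, fun u hu => ⟨key hW₁ u hu, key hW₂ u hu⟩⟩

/-- First moment method: a random `(t + k)`-subset of `U` contains on average at most `k`
vertices `u` with `W₁ u` or `W₂ u` inside it; deleting them from a good choice leaves `t`
vertices. -/
lemma exists_subset_card_eq_forall_not_subset {k : ℕ} (hW₁ : ∀ u ∈ U, u ∉ W₁ u ∧ d ≤ #(W₁ u))
    (hW₂ : ∀ u ∈ U, u ∉ W₂ u ∧ d ≤ #(W₂ u)) (hdt : d < t) (htU : t + k ≤ #U)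
    (hk : 2 * #U * (t + k) ^ (d + 1) ≤ k * #U ^ (d + 1)) :
    ∃ D ⊆ U, #D = t ∧ ∀ u ∈ D, ¬W₁ u ⊆ D ∧ ¬W₂ u ⊆ D := by
  have hds : d + 1 ≤ t + k := by omega
  have hbad : ∑ D ∈ U.powersetCard (t + k), #{u ∈ D | W₁ u ⊆ D ∨ W₂ u ⊆ D}
      ≤ ∑ _D ∈ U.powersetCard (t + k), k := by
    have h₁ := sum_card_filter_subset_le hW₁ hds
    have h₂ := sum_card_filter_subset_le hW₂ hds
    have hchoose := Nat.mul_choose_sub_le_of_mul_pow_le hds htU (by omega) hk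
    rw [mul_assoc] at hchoose
    calc ∑ D ∈ U.powersetCard (t + k), #{u ∈ D | W₁ u ⊆ D ∨ W₂ u ⊆ D}
        ≤ ∑ D ∈ U.powersetCard (t + k), (#{u ∈ D | W₁ u ⊆ D} + #{u ∈ D | W₂ u ⊆ D}) :=
          sum_le_sum fun D _ => by rw [filter_or]; exact card_union_le _ _
      _ ≤ k * (#U).choose (t + k) := by rw [sum_add_distrib]; omega
      _ = ∑ _D ∈ U.powersetCard (t + k), k := by
          rw [sum_const, card_powersetCard, smul_eq_mul, mul_comm]
  obtain ⟨D, hD, hDk⟩ := exists_le_of_sum_le (powersetCard_nonempty.2 htU) hbad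
  obtain ⟨hDU, hDs⟩ := mem_powersetCard.1 hD
  obtain ⟨D', hD'G, hD'⟩ :=
      exists_subset_card_eq (s := {u ∈ D | ¬(W₁ u ⊆ D ∨ W₂ u ⊆ D)}) (n := t) <| by
    have := card_filter_add_card_filter_not (s := D) (fun u => W₁ u ⊆ D ∨ W₂ u ⊆ D)
    omega
  have hD'D : D' ⊆ D := hD'G.trans (filter_subset _ _)
  refine ⟨D', hD'D.trans hDU, hD', fun u hu => ?_⟩
  have hgood := (mem_filter.1 (hD'G hu)).2
  push Not at hgood
  exact ⟨fun h => hgood.1 (h.trans hD'D), fun h => hgood.2 (h.trans hD'D)⟩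

end Selection

section Estimates

open Real

noncomputable def eps (δ : ℝ) : ℝ := (1 + log (δ + 1)) / (δ + 1)

lemma two_le_log {y : ℝ} (hy : 15 ≤ y) : 2 ≤ log y := by
  rw [le_log_iff_exp_le (by linarith)]
  have := exp_one_lt_d9
  calc exp 2 = exp 1 * exp 1 := by rw [← exp_add]; norm_num
    _ ≤ y := by nlinarith [exp_pos 1]

lemma eps_mul {δ : ℝ} (hδ : 0 ≤ δ) : eps δ * (δ + 1) = 1 + log (δ + 1) :=
  div_mul_cancel₀ _ (by linarith)

lemma eps_nonneg {δ : ℝ} (hδ : 0 ≤ δ) : 0 ≤ eps δ :=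
  div_nonneg (by linarith [log_nonneg (by linarith : (1 : ℝ) ≤ δ + 1)]) (by linarith)

lemma eps_le {δ : ℝ} (hδ : 14 ≤ δ) : eps δ ≤ 1 / 4 := by
  have hlog16 : log 16 < 2.78 := by
    rw [show (16 : ℝ) = 2 ^ 4 by norm_num, log_pow]
    linarith [log_two_lt_d9]
  -- tangent line of `log` at `16`
  have htan : log (δ + 1) ≤ log 16 + ((δ + 1) / 16 - 1) := by
    have := log_le_sub_one_of_pos (x := (δ + 1) / 16) (by positivity)
    rw [log_div (by linarith) (by norm_num)] at this
    linarith
  rw [eps, div_le_iff₀ (by linarith)]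
  linarith

lemma add_le_one_sub_mul {ε t k m : ℝ} (hε₀ : 0 ≤ ε) (hε : ε ≤ 1 / 4) (hεt : 11 / 4 ≤ ε * t)
    (hk : k ≤ ε * t + 1) (hm : (1 + 4 * ε) * t - 1 ≤ m) : t + k ≤ (1 - 25 / 21 * ε) * m := by
  have ht : 0 ≤ t := by nlinarith
  have hk' : t + k ≤ (1 + 15 / 11 * ε) * t := by linarith
  have hm' : (1 + 40 / 11 * ε) * t ≤ m := by linarith
  have hcoef : 1 + 15 / 11 * ε ≤ (1 - 25 / 21 * ε) * (1 + 40 / 11 * ε) := by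
    nlinarith [mul_nonneg hε₀ (sub_nonneg.2 hε)]
  calc t + k ≤ (1 + 15 / 11 * ε) * t := hk'
    _ ≤ (1 - 25 / 21 * ε) * ((1 + 40 / 11 * ε) * t) := by
        rw [← mul_assoc]; exact mul_le_mul_of_nonneg_right hcoef ht
    _ ≤ (1 - 25 / 21 * ε) * m := mul_le_mul_of_nonneg_left hm' (by linarith)

lemma pow_le_exp_neg_mul_pow {δ s m : ℝ} {d : ℕ} (hδ : 14 ≤ δ) (hdδ : δ < d + 1) (hs : 0 ≤ s)
    (hsm : s ≤ (1 - 25 / 21 * eps δ) * m) :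
    s ^ d ≤ exp (-(1 + log (δ + 1))) * m ^ d := by
  have hε₀ := eps_nonneg (by linarith : (0 : ℝ) ≤ δ)
  have hc : 0 < 1 - 25 / 21 * eps δ := by linarith [eps_le hδ]
  have hm : 0 ≤ m := nonneg_of_mul_nonneg_right (hs.trans hsm) hc
  have hd : 13 / 15 * (δ + 1) ≤ d := by linarith
  have hexp : 1 + log (δ + 1) ≤ 25 / 21 * eps δ * d := by
    have := mul_le_mul_of_nonneg_left hd (by positivity : 0 ≤ 25 / 21 * eps δ)
    nlinarith [eps_mul (by linarith : (0 : ℝ) ≤ δ), two_le_log (by linarith : (15 : ℝ) ≤ δ + 1)]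
  calc s ^ d ≤ ((1 - 25 / 21 * eps δ) * m) ^ d := pow_le_pow_left₀ hs hsm d
    _ = (1 - 25 / 21 * eps δ) ^ d * m ^ d := mul_pow _ _ _
    _ ≤ exp (-(25 / 21 * eps δ)) ^ d * m ^ d := by
        gcongr
        exact one_sub_le_exp_neg _
    _ ≤ exp (-(1 + log (δ + 1))) * m ^ d := by
        rw [← exp_nat_mul]
        gcongr
        linarith

lemma two_mul_pow_le {δ t k m : ℝ} {d : ℕ} (hδ : 14 ≤ δ) (hdδ : δ < d + 1) (htδ : δ ≤ t)
    (hk₁ : eps δ * t ≤ k) (hk₂ : k ≤ eps δ * t + 1) (hm : (1 + 4 * eps δ) * t - 1 ≤ m) :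
    t + k ≤ m ∧ 2 * m * (t + k) ^ (d + 1) ≤ k * m ^ (d + 1) := by
  have hδ₀ : (0 : ℝ) ≤ δ := by linarith
  have hε₀ := eps_nonneg hδ₀
  have hε := eps_le hδ
  have hεδ := eps_mul hδ₀
  have hL := two_le_log (by linarith : (15 : ℝ) ≤ δ + 1)
  have hεt : 11 / 4 ≤ eps δ * t := by nlinarith [mul_le_mul_of_nonneg_left htδ hε₀]
  have hs := add_le_one_sub_mul hε₀ hε hεt hk₂ hm
  have hs₀ : 0 ≤ t + k := by nlinarith
  have hm₀ : 0 ≤ m := by nlinarith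
  refine ⟨hs.trans (by nlinarith), ?_⟩
  have hfac : 2 * (t + k) * exp (-(1 + log (δ + 1))) ≤ k := by
    have he : exp (-(1 + log (δ + 1))) = exp (-1) / (δ + 1) := by
      rw [neg_add, exp_add, exp_neg (log _), exp_log (by linarith), div_eq_mul_inv]
    have he₁ : exp (-1) ≤ 1 / 2 := by
      rw [exp_neg, inv_le_comm₀ (exp_pos 1) (by norm_num)]
      linarith [add_one_le_exp 1]
    rw [he, mul_div_assoc', div_le_iff₀ (by linarith)]
    nlinarith [mul_le_mul_of_nonneg_right hk₁ (by linarith : (0 : ℝ) ≤ δ + 1)]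
  calc 2 * m * (t + k) ^ (d + 1) = 2 * (t + k) * m * (t + k) ^ d := by ring
    _ ≤ 2 * (t + k) * m * (exp (-(1 + log (δ + 1))) * m ^ d) := by
        gcongr
        exact pow_le_exp_neg_mul_pow hδ hdδ hs₀ hs
    _ = 2 * (t + k) * exp (-(1 + log (δ + 1))) * m ^ (d + 1) := by ring
    _ ≤ k * m ^ (d + 1) := by gcongr

lemma exists_two_mul_pow_le {δ : ℝ} (hδ : 14 ≤ δ) {d t m : ℕ} (hdδ : δ < d + 1) (hdt : d < t)
    (hm : (1 + 4 * eps δ) * t - 1 < m) :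
    ∃ k : ℕ, t + k ≤ m ∧ 2 * m * (t + k) ^ (d + 1) ≤ k * m ^ (d + 1) := by
  have hεt : 0 ≤ eps δ * t := mul_nonneg (eps_nonneg (by linarith)) t.cast_nonneg
  have htδ : δ ≤ t := by
    have : (d : ℝ) + 1 ≤ t := by exact_mod_cast hdt
    linarith
  obtain ⟨hsm, hpow⟩ := two_mul_pow_le hδ hdδ htδ (Nat.le_ceil _) (Nat.ceil_lt_add_one hεt).le hm.le
  exact ⟨⌈eps δ * t⌉₊, by exact_mod_cast hsm, by exact_mod_cast hpow⟩

end Estimates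

theorem stmt19_general {V : Type*} [DecidableEq V] (t : ℕ)
    (δ : ℝ) (hδ : 14 ≤ δ)
    (H : Finset (Finset V)) (h3 : ∀ e ∈ H, e.card = 3)
    (hfree : ¬ ContainsTraceK2t H t)
    (C : Finset (Finset V))
    (hC : ∀ e, e ∈ C ↔ e ∈ H ∧ ∀ a ∈ e, ∀ b ∈ e, a ≠ b → δ < (codeg H a b : ℝ))
    (x y : V) (hxy : x ≠ y) :
    ((C.filter fun e => x ∈ e ∧ y ∈ e).card : ℝ) ≤
      (1 + 4 * ((1 + Real.log (δ + 1)) / (δ + 1))) * t - 1 := by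
  by_contra! hcon
  change (1 + 4 * eps δ) * t - 1 < _ at hcon
  have hU : #(link C x y) = #(C.filter fun e => x ∈ e ∧ y ∈ e) :=
    card_link (fun e he => h3 e ((hC e).1 he).1) hxy
  rw [← hU] at hcon
  have hcodeg : ∀ u ∈ link C x y, ⌊δ⌋₊ < codeg H x u ∧ ⌊δ⌋₊ < codeg H y u := by
    intro u hu
    obtain ⟨hux, huy, he⟩ := mem_link.1 hu
    have hδC := ((hC _).1 he).2
    exact ⟨(Nat.floor_lt (by linarith)).2 (hδC x (by simp) u (by simp) (Ne.symm hux)),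
      (Nat.floor_lt (by linarith)).2 (hδC y (by simp) u (by simp) (Ne.symm huy))⟩
  have hW₁ := fun u hu =>
    notMem_link_erase_and_le_card h3 (Ne.symm (mem_link.1 hu).1) y (hcodeg u hu).1
  have hW₂ := fun u hu =>
    notMem_link_erase_and_le_card h3 (Ne.symm (mem_link.1 hu).2.1) x (hcodeg u hu).2
  suffices ∃ D ⊆ link C x y, #D = t ∧
      ∀ u ∈ D, ¬(link H x u).erase y ⊆ D ∧ ¬(link H y u).erase x ⊆ D by
    obtain ⟨D, hDU, hD, hgood⟩ := this
    exact hfree <| containsTraceK2t_of_forall_not_subset hxy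
      (fun hx => (mem_link.1 (hDU hx)).1 rfl) (fun hy => (mem_link.1 (hDU hy)).2.1 rfl) hD hgood
  rcases le_or_gt t ⌊δ⌋₊ with htd | hdt
  · have htU : (t : ℝ) < #(link C x y) + 1 := by
      nlinarith [mul_nonneg (eps_nonneg (by linarith : (0 : ℝ) ≤ δ)) t.cast_nonneg]
    exact exists_subset_card_eq_forall_not_subset_of_le hW₁ hW₂ htd
      (Nat.lt_add_one_iff.1 (by exact_mod_cast htU))
  · obtain ⟨k, hkU, hk⟩ := exists_two_mul_pow_le hδ (Nat.lt_floor_add_one δ) hdt hcon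
    exact exists_subset_card_eq_forall_not_subset hW₁ hW₂ hdt hkU hk

/-- Let `t ≥ 2`, `δ ≥ 14`, `ε = (1 + log(δ+1))/(δ+1)`, and let `H` be a
3-uniform hypergraph with no `K_{2,t}` trace.  If `C` is the set of edges all of
whose pairs have co-degree greater than `δ` in `H`, then every pair of distinct
vertices lies in at most `(1 + 4ε)t - 1` edges of `C`. -/
theorem stmt19 {V : Type*} [DecidableEq V] (t : ℕ) (ht : 2 ≤ t)
    (δ : ℝ) (hδ : 14 ≤ δ)
    (H : Finset (Finset V)) (h3 : ∀ e ∈ H, e.card = 3)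
    (hfree : ¬ ContainsTraceK2t H t)
    (C : Finset (Finset V))
    (hC : ∀ e, e ∈ C ↔ e ∈ H ∧ ∀ a ∈ e, ∀ b ∈ e, a ≠ b → δ < (codeg H a b : ℝ))
    (x y : V) (hxy : x ≠ y) :
    ((C.filter fun e => x ∈ e ∧ y ∈ e).card : ℝ) ≤
      (1 + 4 * ((1 + Real.log (δ + 1)) / (δ + 1))) * t - 1 :=
  stmt19_general t δ hδ H h3 hfree C hC x y hxy
end
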